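/- arXiv:2304.02752 — 10 statements merged into one kernel-verified Lean document; each statement's English description precedes it below -/
import Mathlib

section
/- If a weighted hypergraph H has no subgraph of density exceeding α(H), then its dual H* has no subgraph of density exceeding α(H)^{-1}. -/
/-- If a weighted hypergraph `H` has no subgraph of density exceeding `α(H)`, then its dual `H*`
has no subgraph of density exceeding `α(H)⁻¹`. A subgraph of `H` is a pair `(V', E')` with
`supp(e) ⊆ V'` for `e ∈ E'`; a subgraph of the dual is a pair `(E'', V'')` such that every
hyperedge containing a vertex of `V''` lies in `E''`. -/
theorem stmt_2 (n m : ℕ) (w : Fin n → ℝ) (u : Fin m → ℝ)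
    (supp : Fin m → Finset (Fin n))
    (hw : ∀ j, 0 < w j) (hu : ∀ i, 0 < u i)
    (hne : ∀ i, (supp i).Nonempty) (hcov : ∀ j, ∃ i, j ∈ supp i)
    (hmax : ∀ (V' : Finset (Fin n)) (E' : Finset (Fin m)),
      (∀ i ∈ E', supp i ⊆ V') →
      (∑ i ∈ E', u i) / (∑ j ∈ V', w j) ≤ (∑ i, u i) / (∑ j, w j)) :
    ∀ (E'' : Finset (Fin m)) (V'' : Finset (Fin n)),
      (∀ j ∈ V'', ∀ i, j ∈ supp i → i ∈ E'') →
      (∑ j ∈ V'', w j) / (∑ i ∈ E'', u i) ≤ ((∑ i, u i) / (∑ j, w j))⁻¹ := by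
  intro E'' V'' hsub
  rw [inv_div]
  set U := ∑ i, u i with hU
  set W := ∑ j, w j with hW
  set uE := ∑ i ∈ E'', u i with huE
  set wV := ∑ j ∈ V'', w j with hwV
  rcases Nat.eq_zero_or_pos n with hn | hn
  · haveI : IsEmpty (Fin n) := by rw [hn]; infer_instance
    have hV : V'' = ∅ := Finset.eq_empty_of_isEmpty V''
    have : wV = 0 := by rw [hwV, hV]; simp
    rw [this, zero_div]
    exact div_nonneg (Finset.sum_nonneg (fun j _ => (hw j).le))
      (Finset.sum_nonneg (fun i _ => (hu i).le))
  · have hWpos : 0 < W := Finset.sum_pos (fun j _ => hw j) (by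
      have : Nonempty (Fin n) := ⟨⟨0, hn⟩⟩
      exact Finset.univ_nonempty)
    obtain ⟨i0, _⟩ := hcov ⟨0, hn⟩
    have hUpos : 0 < U := Finset.sum_pos (fun i _ => hu i) ⟨i0, Finset.mem_univ i0⟩
    have hwVle : wV ≤ W := Finset.sum_le_sum_of_subset_of_nonneg (Finset.subset_univ _)
      (fun j _ _ => (hw j).le)
    have huEle : uE ≤ U := Finset.sum_le_sum_of_subset_of_nonneg (Finset.subset_univ _)
      (fun i _ _ => (hu i).le)
    have huEnn : 0 ≤ uE := Finset.sum_nonneg (fun i _ => (hu i).le)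
    have hwVnn : 0 ≤ wV := Finset.sum_nonneg (fun j _ => (hw j).le)
    rcases eq_or_lt_of_le huEnn with huE0 | huEpos
    · rw [← huE0, div_zero]
      positivity
    -- main case
    have key := hmax V''ᶜ E''ᶜ (by
      intro i hi j hj
      simp only [Finset.mem_compl] at hi ⊢
      intro hjV
      exact hi (hsub j hjV i hj))
    have hsumc1 : ∑ j ∈ V''ᶜ, w j = W - wV := by
      have := Finset.sum_compl_add_sum V'' w
      linarith [this]
    have hsumc2 : ∑ i ∈ E''ᶜ, u i = U - uE := by
      have := Finset.sum_compl_add_sum E'' u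
      linarith [this]
    rw [hsumc1, hsumc2] at key
    rcases eq_or_lt_of_le hwVle with hWeq | hWlt
    · -- V'' = univ, hence E'' = univ
      have hc : ∀ j ∈ V''ᶜ, w j = 0 :=
        (Finset.sum_eq_zero_iff_of_nonneg (fun j _ => (hw j).le)).mp
          (by rw [hsumc1, ← hWeq]; ring)
      have hVuniv : V'' = Finset.univ := by
        rw [Finset.eq_univ_iff_forall]
        intro j
        by_contra h
        exact (hw j).ne' (hc j (Finset.mem_compl.mpr h))
      have hEuniv : E'' = Finset.univ := Finset.eq_univ_of_forall (fun i => by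
        obtain ⟨j, hj⟩ := hne i
        exact hsub j (hVuniv ▸ Finset.mem_univ j) i hj)
      have : uE = U := by rw [huE, hEuniv]
      rw [hWeq, this]
    · -- W - wV > 0
      have hden : 0 < W - wV := by linarith
      rw [div_le_div_iff₀ hden hWpos] at key
      rw [div_le_div_iff₀ huEpos hUpos]
      nlinarith
end

section
/- For any support matrix A of a weighted hypergraph H and any subgraph H' ⊆ H, the density of H' is at most the maximum weighted column sum of A: α(H') ≤ max_j Σ_i a_{ij}. -/
/-- For any support matrix `A` of a weighted hypergraph `H` and any subgraph `H' = (V', E')`,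
the density of `H'` is at most the maximum column sum of `A`:
`α(H') ≤ max_j ∑_i a_{ij}`. -/
theorem stmt_5 (n m : ℕ) [NeZero n] (w : Fin n → ℝ) (u : Fin m → ℝ)
    (supp : Fin m → Finset (Fin n))
    (hw : ∀ j, 0 < w j) (hu : ∀ i, 0 < u i)
    (A : Matrix (Fin m) (Fin n) ℝ)
    (hA0 : ∀ i j, 0 ≤ A i j)
    (hAz : ∀ i j, j ∉ supp i → A i j = 0)
    (hArow : ∀ i, ∑ j, w j * A i j = u i)
    (V' : Finset (Fin n)) (E' : Finset (Fin m))
    (hsub : ∀ i ∈ E', supp i ⊆ V') (hVne : V'.Nonempty) :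
    (∑ i ∈ E', u i) / (∑ j ∈ V', w j) ≤ ⨆ j : Fin n, ∑ i, A i j := by
  have hwpos : 0 < ∑ j ∈ V', w j :=
    Finset.sum_pos (fun j _ => hw j) hVne
  rw [div_le_iff₀ hwpos]
  set S : ℝ := ⨆ j : Fin n, ∑ i, A i j with hS
  have hle : ∀ j, ∑ i, A i j ≤ S := fun j =>
    le_ciSup (Set.Finite.bddAbove (Set.finite_range (fun j => ∑ i, A i j))) j
  calc ∑ i ∈ E', u i
      = ∑ i ∈ E', ∑ j ∈ V', w j * A i j := by
        refine Finset.sum_congr rfl fun i hi => ?_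
        rw [← hArow i]
        symm
        refine Finset.sum_subset (Finset.subset_univ _) fun j _ hj => ?_
        rw [hAz i j (fun h => hj (hsub i hi h)), mul_zero]
    _ = ∑ j ∈ V', w j * ∑ i ∈ E', A i j := by
        rw [Finset.sum_comm]
        simp [Finset.mul_sum]
    _ ≤ ∑ j ∈ V', w j * S := by
        refine Finset.sum_le_sum fun j _ => ?_
        refine mul_le_mul_of_nonneg_left ?_ (hw j).le
        exact le_trans (Finset.sum_le_sum_of_subset_of_nonneg
          (Finset.subset_univ _) fun i _ _ => hA0 i j) (hle j)
    _ = S * ∑ j ∈ V', w j := by rw [Finset.mul_sum]; exact Finset.sum_congr rfl fun j _ => mul_comm _ _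
end

section
/- If a weighted hypergraph H has density α and no subgraph of H has density exceeding α, then there exists a support matrix A for H all of whose column sums equal α: Σ_i a_{ij} = α for every j. -/
open Finset

private lemma sum_update_real {α : Type*} [DecidableEq α]
    (f : α → ℝ) (s : Finset α) (a : α) (v : ℝ) :
    ∑ x ∈ s, Function.update f a v x
      = (∑ x ∈ s, f x) + (if a ∈ s then v - f a else 0) := by
  by_cases h : a ∈ s
  · rw [if_pos h, Finset.sum_update_of_mem h, ← Finset.sum_erase_add s f h]
    rw [Finset.sdiff_singleton_eq_erase]
    ring
  · rw [if_neg h, add_zero]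
    exact Finset.sum_congr rfl
      (fun x hx => Function.update_of_ne (by rintro rfl; exact h hx) _ _)

private lemma biUnion_union_eq {α β : Type*} [DecidableEq α] [DecidableEq β]
    (s t : Finset α) (f : α → Finset β) :
    (s ∪ t).biUnion f = s.biUnion f ∪ t.biUnion f := by
  ext x
  simp only [Finset.mem_biUnion, Finset.mem_union]
  constructor
  · rintro ⟨i, hi | hi, hx⟩
    exacts [Or.inl ⟨i, hi, hx⟩, Or.inr ⟨i, hi, hx⟩]
  · rintro (⟨i, hi, hx⟩ | ⟨i, hi, hx⟩)
    exacts [⟨i, Or.inl hi, hx⟩, ⟨i, Or.inr hi, hx⟩]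

private lemma biUnion_erase_eq {α β : Type*} [DecidableEq β]
    (s : Finset α) (f : α → Finset β) (b : β) :
    s.biUnion (fun a => (f a).erase b) = (s.biUnion f).erase b := by
  ext x
  simp only [Finset.mem_biUnion, Finset.mem_erase]
  constructor
  · rintro ⟨a, ha, hne, hx⟩
    exact ⟨hne, a, ha, hx⟩
  · rintro ⟨hne, a, ha, hx⟩
    exact ⟨a, ha, hne, hx⟩

set_option maxHeartbeats 1000000 in
private lemma transport {m n : ℕ} :
    ∀ (k : ℕ) (supp : Fin m → Finset (Fin n)) (u : Fin m → ℝ) (d : Fin n → ℝ),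
    (∑ i, (supp i).card) ≤ k → (∀ i, 0 ≤ u i) → (∀ j, 0 ≤ d j) →
    (∑ i, u i) = (∑ j, d j) →
    (∀ E' : Finset (Fin m), ∑ i ∈ E', u i ≤ ∑ j ∈ E'.biUnion supp, d j) →
    ∃ b : Fin m → Fin n → ℝ,
      (∀ i j, 0 ≤ b i j) ∧ (∀ i j, j ∉ supp i → b i j = 0) ∧
      (∀ i, ∑ j, b i j = u i) ∧ (∀ j, ∑ i, b i j = d j) := by
  intro k
  induction k with
  | zero =>
    intro supp u d hk hu hd hsum hall
    have hsz : ∀ i, supp i = ∅ := by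
      intro i
      have h1 : (supp i).card ≤ 0 :=
        le_trans (Finset.single_le_sum (f := fun i => (supp i).card)
          (fun i _ => Nat.zero_le _) (mem_univ i)) hk
      exact Finset.card_eq_zero.mp (Nat.le_zero.mp h1)
    have hu0 : ∀ i, u i = 0 := by
      intro i
      have := hall {i}
      simp [hsz i] at this
      linarith [hu i]
    have hd0 : ∀ j, d j = 0 := by
      have hz : ∑ j, d j = 0 := by
        rw [← hsum]; exact Finset.sum_eq_zero fun i _ => hu0 i
      intro j
      exact (Finset.sum_eq_zero_iff_of_nonneg (fun j _ => hd j)).mp hz j (mem_univ j)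
    exact ⟨fun _ _ => 0, fun _ _ => le_refl _, fun _ _ _ => rfl,
      fun i => by simp [hu0 i], fun j => by simp [hd0 j]⟩
  | succ k IH =>
    intro supp u d hk hu hd hsum hall
    classical
    by_cases h0 : ∀ i, u i = 0
    · have hd0 : ∀ j, d j = 0 := by
        have hz : ∑ j, d j = 0 := by
          rw [← hsum]; exact Finset.sum_eq_zero fun i _ => h0 i
        intro j
        exact (Finset.sum_eq_zero_iff_of_nonneg (fun j _ => hd j)).mp hz j (mem_univ j)
      exact ⟨fun _ _ => 0, fun _ _ => le_refl _, fun _ _ _ => rfl,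
        fun i => by simp [h0 i], fun j => by simp [hd0 j]⟩
    push_neg at h0
    obtain ⟨i₀, hi₀⟩ := h0
    have hui₀ : 0 < u i₀ := (hu i₀).lt_of_ne (Ne.symm hi₀)
    have hsupp₀ : u i₀ ≤ ∑ j ∈ supp i₀, d j := by
      have := hall {i₀}; simpa using this
    obtain ⟨j₀, hj₀mem, hdj₀⟩ : ∃ j₀ ∈ supp i₀, 0 < d j₀ := by
      by_contra h
      push_neg at h
      have : ∑ j ∈ supp i₀, d j ≤ 0 := Finset.sum_nonpos fun j hj => h j hj
      linarith
    obtain ⟨β, hβ0, hβu, hβd, hβslack, hβcases⟩ :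
        ∃ β : ℝ, 0 ≤ β ∧ β ≤ u i₀ ∧ β ≤ d j₀ ∧
        (∀ E' : Finset (Fin m), i₀ ∉ E' → j₀ ∈ E'.biUnion supp →
          β ≤ (∑ j ∈ E'.biUnion supp, d j) - ∑ i ∈ E', u i) ∧
        (β = u i₀ ∨ β = d j₀ ∨ ∃ E' : Finset (Fin m), i₀ ∉ E' ∧ j₀ ∈ E'.biUnion supp ∧
          β = (∑ j ∈ E'.biUnion supp, d j) - ∑ i ∈ E', u i) := by
      classical
      set slack : Finset (Fin m) → ℝ :=
        fun E' => (∑ j ∈ E'.biUnion supp, d j) - ∑ i ∈ E', u i with hslack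
      set S : Finset (Finset (Fin m)) :=
        univ.powerset.filter (fun E' => i₀ ∉ E' ∧ j₀ ∈ E'.biUnion supp) with hS
      set cand : Finset ℝ := insert (u i₀) (insert (d j₀) (S.image slack)) with hcand
      have hcne : cand.Nonempty := ⟨u i₀, by simp [hcand]⟩
      refine ⟨cand.min' hcne, ?_, ?_, ?_, ?_, ?_⟩
      · apply Finset.le_min'
        intro y hy
        simp only [hcand, Finset.mem_insert, Finset.mem_image] at hy
        rcases hy with rfl | rfl | ⟨E', _, rfl⟩
        · exact le_of_lt hui₀
        · exact le_of_lt hdj₀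
        · have := hall E'
          simp only [hslack]
          linarith
      · exact Finset.min'_le _ _ (by simp [hcand])
      · exact Finset.min'_le _ _ (by simp [hcand])
      · intro E' h1 h2
        have hES : E' ∈ S := by
          simp only [hS, Finset.mem_filter, Finset.mem_powerset]
          exact ⟨Finset.subset_univ _, h1, h2⟩
        exact Finset.min'_le _ _ (by
          simp only [hcand, Finset.mem_insert]
          exact Or.inr (Or.inr (Finset.mem_image_of_mem _ hES)))
      · have hmem : cand.min' hcne ∈ cand := Finset.min'_mem _ _
        simp only [hcand, Finset.mem_insert, Finset.mem_image] at hmem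
        rcases hmem with h | h | ⟨E', hE', h⟩
        · exact Or.inl h
        · exact Or.inr (Or.inl h)
        · refine Or.inr (Or.inr ⟨E', ?_, ?_, h.symm⟩)
          · simp only [hS, Finset.mem_filter] at hE'
            exact hE'.2.1
          · simp only [hS, Finset.mem_filter] at hE'
            exact hE'.2.2
    set u' := Function.update u i₀ (u i₀ - β) with hu'def
    set d' := Function.update d j₀ (d j₀ - β) with hd'def
    have hu' : ∀ i, 0 ≤ u' i := by
      intro i
      by_cases h : i = i₀
      · subst h; simp [hu'def]; linarith
      · simp [hu'def, Function.update_of_ne h]; exact hu i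
    have hd' : ∀ j, 0 ≤ d' j := by
      intro j
      by_cases h : j = j₀
      · subst h; simp [hd'def]; linarith
      · simp [hd'def, Function.update_of_ne h]; exact hd j
    have hUE : ∀ E' : Finset (Fin m),
        ∑ i ∈ E', u' i = (∑ i ∈ E', u i) - (if i₀ ∈ E' then β else 0) := by
      intro E'
      rw [hu'def, sum_update_real]
      split_ifs <;> ring
    have hDE : ∀ T : Finset (Fin n),
        ∑ j ∈ T, d' j = (∑ j ∈ T, d j) - (if j₀ ∈ T then β else 0) := by
      intro T
      rw [hd'def, sum_update_real]
      split_ifs <;> ring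
    have hsum' : (∑ i, u' i) = ∑ j, d' j := by
      rw [hUE, hDE]
      simp [hsum]
    have hall' : ∀ E' : Finset (Fin m), ∑ i ∈ E', u' i ≤ ∑ j ∈ E'.biUnion supp, d' j := by
      intro E'
      rw [hUE, hDE]
      by_cases hi : i₀ ∈ E'
      · have hj : j₀ ∈ E'.biUnion supp := Finset.mem_biUnion.mpr ⟨i₀, hi, hj₀mem⟩
        simp only [if_pos hi, if_pos hj]
        linarith [hall E']
      · by_cases hj : j₀ ∈ E'.biUnion supp
        · have := hβslack E' hi hj
          simp only [if_neg hi, if_pos hj]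
          linarith
        · simp only [if_neg hi, if_neg hj]
          linarith [hall E']
    have hu'i₀ : u' i₀ = u i₀ - β := by simp [hu'def]
    have hd'j₀ : d' j₀ = d j₀ - β := by simp [hd'def]
    -- a generic counting lemma
    have hcount : ∀ supp' : Fin m → Finset (Fin n),
        (∀ i, (supp' i).card ≤ (supp i).card) → (supp' i₀).card < (supp i₀).card →
        ∑ i, (supp' i).card ≤ k := by
      intro supp' h1 h2
      have : ∑ i, (supp' i).card < ∑ i, (supp i).card :=
        Finset.sum_lt_sum (fun i _ => h1 i) ⟨i₀, mem_univ _, h2⟩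
      omega
    have main : ∃ supp' : Fin m → Finset (Fin n),
        (∀ i, supp' i ⊆ supp i) ∧
        (∑ i, (supp' i).card) ≤ k ∧
        (∀ E' : Finset (Fin m), ∑ i ∈ E', u' i ≤ ∑ j ∈ E'.biUnion supp', d' j) := by
      rcases hβcases with hβA | hβB | ⟨F, hFi, hFj, hFβ⟩
      · -- case A : β = u i₀, empty out row i₀
        refine ⟨Function.update supp i₀ ∅, ?_, ?_, ?_⟩
        · intro i
          by_cases h : i = i₀
          · subst h; simp
          · simp [Function.update_of_ne h]
        · apply hcount
          · intro i
            by_cases h : i = i₀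
            · subst h; simp
            · simp [Function.update_of_ne h]
          · simpa using Finset.card_pos.mpr ⟨j₀, hj₀mem⟩
        · intro E'
          have hzero : u' i₀ = 0 := by rw [hu'i₀, hβA]; ring
          have h1 : ∑ i ∈ E', u' i = ∑ i ∈ E'.erase i₀, u' i := by
            by_cases h : i₀ ∈ E'
            · rw [← Finset.sum_erase_add E' u' h, hzero, add_zero]
            · rw [Finset.erase_eq_of_notMem h]
          have h2 : (E'.erase i₀).biUnion (Function.update supp i₀ ∅)
              = (E'.erase i₀).biUnion supp :=
            Finset.biUnion_congr rfl
              (fun i hi => Function.update_of_ne (Finset.ne_of_mem_erase hi) _ _)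
          have h3 : (E'.erase i₀).biUnion (Function.update supp i₀ ∅)
              ⊆ E'.biUnion (Function.update supp i₀ ∅) :=
            Finset.biUnion_subset_biUnion_of_subset_left _ (Finset.erase_subset _ _)
          calc ∑ i ∈ E', u' i = ∑ i ∈ E'.erase i₀, u' i := h1
            _ ≤ ∑ j ∈ (E'.erase i₀).biUnion supp, d' j := hall' _
            _ = ∑ j ∈ (E'.erase i₀).biUnion (Function.update supp i₀ ∅), d' j := by
                rw [h2]
            _ ≤ ∑ j ∈ E'.biUnion (Function.update supp i₀ ∅), d' j :=
                Finset.sum_le_sum_of_subset_of_nonneg h3 (fun j _ _ => hd' j)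
      · -- case B : β = d j₀, remove j₀ from every support
        refine ⟨fun i => (supp i).erase j₀, ?_, ?_, ?_⟩
        · intro i; exact Finset.erase_subset _ _
        · apply hcount
          · intro i; exact Finset.card_le_card (Finset.erase_subset _ _)
          · exact Finset.card_erase_lt_of_mem hj₀mem
        · intro E'
          have hzero : d' j₀ = 0 := by rw [hd'j₀, hβB]; ring
          have h1 : E'.biUnion (fun i => (supp i).erase j₀)
              = (E'.biUnion supp).erase j₀ := biUnion_erase_eq E' supp j₀
          rw [h1, Finset.sum_erase _ hzero]
          exact hall' E'
      · -- case C : slack F = β, remove edge (i₀, j₀)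
        have htF : ∑ j ∈ F.biUnion supp, d' j = ∑ i ∈ F, u' i := by
          rw [hUE, hDE, if_neg hFi, if_pos hFj]
          linarith [hFβ]
        set supp' := Function.update supp i₀ ((supp i₀).erase j₀) with hsupp'
        have hsub : ∀ i, supp' i ⊆ supp i := by
          intro i
          by_cases h : i = i₀
          · subst h; simp [hsupp']; exact Finset.erase_subset _ _
          · simp [hsupp', Function.update_of_ne h]
        have hNeq : ∀ T : Finset (Fin m), i₀ ∉ T → T.biUnion supp' = T.biUnion supp :=
          fun T hT => Finset.biUnion_congr rfl
            (fun i hi => Function.update_of_ne (by rintro rfl; exact hT hi) _ _)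
        refine ⟨supp', hsub, ?_, ?_⟩
        · apply hcount
          · intro i; exact Finset.card_le_card (hsub i)
          · have : supp' i₀ = (supp i₀).erase j₀ := by simp [hsupp']
            rw [this]
            exact Finset.card_erase_lt_of_mem hj₀mem
        · intro E'
          by_cases hi : i₀ ∈ E'
          · have hsub1 : E'.biUnion supp' ⊆ E'.biUnion supp := by
              intro x hx
              obtain ⟨i, hiE, hxi⟩ := Finset.mem_biUnion.mp hx
              exact Finset.mem_biUnion.mpr ⟨i, hiE, hsub i hxi⟩
            have hsub2 : E'.biUnion supp ⊆ insert j₀ (E'.biUnion supp') := by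
              intro x hx
              obtain ⟨i, hiE, hxi⟩ := Finset.mem_biUnion.mp hx
              by_cases hii : i = i₀
              · subst hii
                by_cases hxj : x = j₀
                · exact Finset.mem_insert.mpr (Or.inl hxj)
                · refine Finset.mem_insert.mpr (Or.inr (Finset.mem_biUnion.mpr
                    ⟨i, hiE, ?_⟩))
                  simp [hsupp', Finset.mem_erase, hxj, hxi]
              · exact Finset.mem_insert.mpr (Or.inr (Finset.mem_biUnion.mpr
                  ⟨i, hiE, by simp [hsupp', Function.update_of_ne hii, hxi]⟩))
            by_cases hj : j₀ ∈ E'.biUnion supp'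
            · have heq : E'.biUnion supp' = E'.biUnion supp := by
                apply Finset.Subset.antisymm hsub1
                intro x hx
                rcases Finset.mem_insert.mp (hsub2 hx) with rfl | h
                · exact hj
                · exact h
              rw [heq]; exact hall' E'
            · -- uncrossing with the tight set F
              have e1 : ∑ i ∈ E' ∪ F, u' i + ∑ i ∈ E' ∩ F, u' i
                  = ∑ i ∈ E', u' i + ∑ i ∈ F, u' i := Finset.sum_union_inter
              have e2 : ∑ i ∈ E' ∪ F, u' i ≤ ∑ j ∈ (E' ∪ F).biUnion supp, d' j :=
                hall' _
              have e3 : (E' ∪ F).biUnion supp = E'.biUnion supp ∪ F.biUnion supp :=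
                biUnion_union_eq E' F supp
              have e4 : ∑ i ∈ E' ∩ F, u' i ≤ ∑ j ∈ (E' ∩ F).biUnion supp, d' j :=
                hall' _
              have e5 : (E' ∩ F).biUnion supp ⊆ (E'.biUnion supp') ∩ F.biUnion supp := by
                intro x hx
                obtain ⟨i, hiEF, hxi⟩ := Finset.mem_biUnion.mp hx
                obtain ⟨hiE, hiF⟩ := Finset.mem_inter.mp hiEF
                have hii : i ≠ i₀ := fun h => hFi (h ▸ hiF)
                refine Finset.mem_inter.mpr ⟨?_, ?_⟩
                · exact Finset.mem_biUnion.mpr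
                    ⟨i, hiE, by simp [hsupp', Function.update_of_ne hii, hxi]⟩
                · exact Finset.mem_biUnion.mpr ⟨i, hiF, hxi⟩
              have e6 : ∑ j ∈ (E' ∩ F).biUnion supp, d' j
                  ≤ ∑ j ∈ (E'.biUnion supp') ∩ F.biUnion supp, d' j :=
                Finset.sum_le_sum_of_subset_of_nonneg e5 (fun j _ _ => hd' j)
              have e7 : ∑ j ∈ E'.biUnion supp ∪ F.biUnion supp, d' j
                  ≤ ∑ j ∈ (E'.biUnion supp') ∪ F.biUnion supp, d' j := by
                apply Finset.sum_le_sum_of_subset_of_nonneg _ (fun j _ _ => hd' j)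
                intro x hx
                rcases Finset.mem_union.mp hx with h | h
                · rcases Finset.mem_insert.mp (hsub2 h) with rfl | h'
                  · exact Finset.mem_union.mpr (Or.inr hFj)
                  · exact Finset.mem_union.mpr (Or.inl h')
                · exact Finset.mem_union.mpr (Or.inr h)
              have e8 : ∑ j ∈ (E'.biUnion supp') ∪ F.biUnion supp, d' j
                  + ∑ j ∈ (E'.biUnion supp') ∩ F.biUnion supp, d' j
                  = ∑ j ∈ E'.biUnion supp', d' j + ∑ j ∈ F.biUnion supp, d' j :=
                Finset.sum_union_inter
              rw [e3] at e2
              linarith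
          · rw [hNeq E' hi]; exact hall' E'
    obtain ⟨supp', hsub', hcnt', hall2⟩ := main
    obtain ⟨b', hb1, hb2, hb3, hb4⟩ := IH supp' u' d' hcnt' hu' hd' hsum' hall2
    refine ⟨fun i j => b' i j + if i = i₀ ∧ j = j₀ then β else 0, ?_, ?_, ?_, ?_⟩
    · intro i j
      dsimp only
      have : (0:ℝ) ≤ if i = i₀ ∧ j = j₀ then β else 0 := by
        split_ifs
        · exact hβ0
        · exact le_refl _
      linarith [hb1 i j]
    · intro i j hij
      dsimp only
      have h1 : b' i j = 0 := hb2 i j (fun h => hij (hsub' i h))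
      have h2 : ¬(i = i₀ ∧ j = j₀) := by
        rintro ⟨rfl, rfl⟩; exact hij hj₀mem
      simp [h1, h2]
    · intro i
      dsimp only
      rw [Finset.sum_add_distrib, hb3]
      by_cases h : i = i₀
      · have hsite : ∑ j : Fin n, (if i = i₀ ∧ j = j₀ then β else 0) = β := by
          simp [h]
        rw [hsite, h, hu'i₀]; ring
      · have hsite : ∑ j : Fin n, (if i = i₀ ∧ j = j₀ then β else 0) = 0 := by
          apply Finset.sum_eq_zero
          intro j _
          simp [h]
        rw [hsite, hu'def, Function.update_of_ne h]; ring
    · intro j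
      dsimp only
      rw [Finset.sum_add_distrib, hb4]
      by_cases h : j = j₀
      · have hsite : ∑ i : Fin m, (if i = i₀ ∧ j = j₀ then β else 0) = β := by
          simp [h]
        rw [hsite, h, hd'j₀]; ring
      · have hsite : ∑ i : Fin m, (if i = i₀ ∧ j = j₀ then β else 0) = 0 := by
          apply Finset.sum_eq_zero
          intro i _
          simp [h]
        rw [hsite, hd'def, Function.update_of_ne h]; ring

set_option maxHeartbeats 1000000 in
/-- If a weighted hypergraph `H` has density `α` and no subgraph of `H` has density exceeding
`α`, then there exists a support matrix `A` for `H` all of whose column sums equal `α`. -/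
theorem stmt_6 (n m : ℕ) (w : Fin n → ℝ) (u : Fin m → ℝ)
    (supp : Fin m → Finset (Fin n))
    (hw : ∀ j, 0 < w j) (hu : ∀ i, 0 < u i)
    (hne : ∀ i, (supp i).Nonempty) (hcov : ∀ j, ∃ i, j ∈ supp i)
    (hmax : ∀ (V' : Finset (Fin n)) (E' : Finset (Fin m)),
      (∀ i ∈ E', supp i ⊆ V') →
      (∑ i ∈ E', u i) / (∑ j ∈ V', w j) ≤ (∑ i, u i) / (∑ j, w j)) :
    ∃ A : Matrix (Fin m) (Fin n) ℝ,
      (∀ i j, 0 ≤ A i j) ∧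
      (∀ i j, j ∉ supp i → A i j = 0) ∧
      (∀ i, ∑ j, w j * A i j = u i) ∧
      (∀ j, ∑ i, A i j = (∑ i, u i) / (∑ j, w j)) := by
  rcases isEmpty_or_nonempty (Fin n) with hE | hNE
  · have him : IsEmpty (Fin m) := ⟨fun i => by
      obtain ⟨j, _⟩ := hne i; exact isEmptyElim j⟩
    exact ⟨0, fun i => isEmptyElim i, fun i => isEmptyElim i,
      fun i => isEmptyElim i, fun j => isEmptyElim j⟩
  set α := (∑ i, u i) / (∑ j, w j) with hα
  have hwpos : 0 < ∑ j, w j :=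
    Finset.sum_pos (fun j _ => hw j) Finset.univ_nonempty
  have hα0 : 0 ≤ α := by
    apply div_nonneg _ (le_of_lt hwpos)
    exact Finset.sum_nonneg fun i _ => le_of_lt (hu i)
  set d : Fin n → ℝ := fun j => α * w j with hd
  have hdnn : ∀ j, 0 ≤ d j := fun j => mul_nonneg hα0 (le_of_lt (hw j))
  have hsum : (∑ i, u i) = ∑ j, d j := by
    rw [hd, ← Finset.mul_sum, hα, div_mul_cancel₀ _ hwpos.ne']
  have hall : ∀ E' : Finset (Fin m), ∑ i ∈ E', u i ≤ ∑ j ∈ E'.biUnion supp, d j := by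
    intro E'
    rcases E'.eq_empty_or_nonempty with rfl | ⟨i₁, hi₁⟩
    · simpa using Finset.sum_nonneg fun j _ => hdnn j
    · set V := E'.biUnion supp with hV
      have hVne : V.Nonempty := by
        obtain ⟨j, hj⟩ := hne i₁
        exact ⟨j, Finset.mem_biUnion.mpr ⟨i₁, hi₁, hj⟩⟩
      have hVpos : 0 < ∑ j ∈ V, w j := Finset.sum_pos (fun j _ => hw j) hVne
      have := hmax V E' (fun i hi => Finset.subset_biUnion_of_mem supp hi)
      have h2 : ∑ i ∈ E', u i ≤ α * ∑ j ∈ V, w j := by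
        calc ∑ i ∈ E', u i = ((∑ i ∈ E', u i) / (∑ j ∈ V, w j)) * ∑ j ∈ V, w j := by
              rw [div_mul_cancel₀ _ hVpos.ne']
          _ ≤ α * ∑ j ∈ V, w j := by
              apply mul_le_mul_of_nonneg_right this (le_of_lt hVpos)
      rw [hd]
      calc ∑ i ∈ E', u i ≤ α * ∑ j ∈ V, w j := h2
        _ = ∑ j ∈ V, α * w j := by rw [Finset.mul_sum]
  obtain ⟨b, hb1, hb2, hb3, hb4⟩ := transport (∑ i, (supp i).card) supp u d
    (le_refl _) (fun i => le_of_lt (hu i)) hdnn hsum hall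
  refine ⟨fun i j => b i j / w j, ?_, ?_, ?_, ?_⟩
  · intro i j; exact div_nonneg (hb1 i j) (le_of_lt (hw j))
  · intro i j hij
    dsimp only
    rw [hb2 i j hij]; exact zero_div _
  · intro i
    dsimp only
    rw [← hb3 i]
    apply Finset.sum_congr rfl
    intro j _
    rw [mul_comm, div_mul_cancel₀ _ (hw j).ne']
  · intro j
    dsimp only
    rw [← Finset.sum_div, hb4 j, hd]
    exact mul_div_cancel_right₀ _ (hw j).ne'
end

section
/- If no subgraph of a weighted hypergraph H (including H itself) has density exceeding α, then there exists a support matrix A for H with Σ_i a_{ij} ≤ α for every column j. -/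
open Finset

/-- Reachability of edges along augmenting paths, carrying the set of used edges. -/
inductive HReach {m n : ℕ} (supp : Fin m → Finset (Fin n)) (b : Fin m → Fin n → ℝ)
    (i0 : Fin m) : Finset (Fin m) → Fin m → Prop
  | base : HReach supp b i0 {i0} i0
  | step {S : Finset (Fin m)} {i : Fin m} {j : Fin n} {i' : Fin m} :
      HReach supp b i0 S i → j ∈ supp i → i' ∉ S → 0 < b i' j →
      HReach supp b i0 (insert i' S) i'

lemma HReach.mem {m n : ℕ} {supp : Fin m → Finset (Fin n)} {b : Fin m → Fin n → ℝ}
    {i0 : Fin m} {S : Finset (Fin m)} {i : Fin m} (h : HReach supp b i0 S i) :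
    i ∈ S ∧ ∀ i'' ∈ S, ∃ S', HReach supp b i0 S' i'' := by
  induction h with
  | base => exact ⟨mem_singleton_self i0, fun i'' h'' => ⟨{i0}, by
      rw [mem_singleton] at h''; subst h''; exact HReach.base⟩⟩
  | @step S i j i' hr hj hi' hb ih =>
    refine ⟨mem_insert_self i' S, fun i'' h'' => ?_⟩
    rcases mem_insert.1 h'' with h'' | h''
    · subst h''; exact ⟨_, HReach.step hr hj hi' hb⟩
    · exact ih.2 i'' h''

/-- Augmentation lemma: from a reachable edge `i`, one can reroute a small amount `ε` of flow
out of row `i` back to the deficient row `i0`, keeping all column sums. -/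
lemma HReach.augment {m n : ℕ} {supp : Fin m → Finset (Fin n)} {b : Fin m → Fin n → ℝ}
    {u : Fin m → ℝ} {i0 : Fin m}
    (hb0 : ∀ i j, 0 ≤ b i j) (hbs : ∀ i j, j ∉ supp i → b i j = 0)
    (hrow : ∀ i, ∑ j, b i j ≤ u i) (hdef : ∑ j, b i0 j < u i0)
    {S : Finset (Fin m)} {i : Fin m} (h : HReach supp b i0 S i) :
    ∀ ε₀ > 0, ∃ ε, ∃ b' : Fin m → Fin n → ℝ, 0 < ε ∧ ε ≤ ε₀ ∧
      (∀ i' j, 0 ≤ b' i' j) ∧ (∀ i' j, j ∉ supp i' → b' i' j = 0) ∧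
      (∀ j, ∑ i', b' i' j = ∑ i', b i' j) ∧
      (∀ i', ∑ j, b' i' j ≤ u i') ∧
      (∑ j, b' i j ≤ u i - ε) ∧
      (∀ i', i' ∉ S → b' i' = b i') := by
  induction h with
  | base =>
    intro ε₀ hε₀
    refine ⟨min ε₀ (u i0 - ∑ j, b i0 j), b, lt_min hε₀ (by linarith), min_le_left _ _,
      hb0, hbs, fun _ => rfl, hrow, ?_, fun _ _ => rfl⟩
    have := min_le_right ε₀ (u i0 - ∑ j, b i0 j)
    linarith
  | @step S i j i' hr hj hi' hbpos ih =>
    intro ε₀ hε₀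
    obtain ⟨ε, b', hε, hεle, h0', hs', hcol', hrow', hi, hout⟩ :=
      ih (min ε₀ (b i' j)) (lt_min hε₀ hbpos)
    have hii' : i ≠ i' := fun h => hi' (h ▸ hr.mem.1)
    have hb'i' : b' i' = b i' := hout i' hi'
    have hεb : ε ≤ b i' j := hεle.trans (min_le_right _ _)
    have hεε₀ : ε ≤ ε₀ := hεle.trans (min_le_left _ _)
    have hjsupp' : j ∈ supp i' := by
      by_contra hc; exact absurd (hbs i' j hc) (ne_of_gt hbpos)
    set b'' : Fin m → Fin n → ℝ := fun i'' j'' =>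
      b' i'' j'' + (if j'' = j then
        (if i'' = i then ε else 0) - (if i'' = i' then ε else 0) else 0) with hb''
    have hrow'' : ∀ i'', ∑ j'', b'' i'' j'' =
        ∑ j'', b' i'' j'' + ((if i'' = i then ε else 0) - (if i'' = i' then ε else 0)) := by
      intro i''
      rw [Finset.sum_add_distrib, Finset.sum_ite_eq' Finset.univ j]
      simp
    have hcell : ∀ i'' j'', i'' ≠ i → i'' ≠ i' → b'' i'' j'' = b' i'' j'' := by
      intro i'' j'' h1 h2; simp [hb'', h1, h2]
    refine ⟨ε, b'', hε, hεε₀, ?_, ?_, ?_, ?_, ?_, ?_⟩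
    · -- nonneg
      intro a c
      by_cases hc : c = j
      · subst hc
        by_cases ha : a = i
        · subst ha; simp only [hb'', if_pos rfl, if_neg hii']
          have := h0' a c; simp; linarith
        · by_cases ha' : a = i'
          · subst ha'; simp [hb'', ha, hb'i']
            linarith
          · simp [hb'', ha, ha']; exact h0' a c
      · simp [hb'', hc]; exact h0' a c
    · -- support
      intro a c hcs
      by_cases hc : c = j
      · subst hc
        by_cases ha : a = i
        · exact absurd hj (ha ▸ hcs)
        · by_cases ha' : a = i'
          · exact absurd hjsupp' (ha' ▸ hcs)
          · simp [hb'', ha, ha']; exact hs' a _ hcs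
      · simp [hb'', hc]; exact hs' a _ hcs
    · -- column sums
      intro c
      by_cases hc : c = j
      · subst hc
        have heq : ∑ x : Fin m, b'' x c =
            ∑ x : Fin m, (b' x c + ((if x = i then ε else 0) - (if x = i' then ε else 0))) := by
          refine Finset.sum_congr rfl fun x _ => ?_
          simp [hb'']
        rw [heq, Finset.sum_add_distrib, Finset.sum_sub_distrib,
          Finset.sum_ite_eq' Finset.univ i, Finset.sum_ite_eq' Finset.univ i']
        simp [hcol' c]
      · simp only [hb'', if_neg hc]
        simpa using hcol' c
    · -- row sums
      intro a
      rw [hrow'' a]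
      by_cases ha : a = i
      · subst ha; simp [hii']; linarith [hi]
      · by_cases ha' : a = i'
        · subst ha'; simp [ha]
          linarith [hrow' a]
        · simp [ha, ha']; exact hrow' a
    · -- deficiency at i'
      rw [hrow'' i']
      simp [hii'.symm]
      have : ∑ j'', b' i' j'' = ∑ j'', b i' j'' := by rw [hb'i']
      linarith [hrow i']
    · -- unchanged rows
      intro a ha
      have ha' : a ≠ i' := fun h => ha (h ▸ mem_insert_self i' S)
      have haS : a ∉ S := fun h => ha (mem_insert_of_mem h)
      funext c
      rw [hcell a c (fun h => haS (h ▸ hr.mem.1)) ha', hout a haS]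


/-- If no subgraph of a weighted hypergraph `H` (including `H` itself) has density exceeding
`α`, then there exists a support matrix `A` for `H` with all column sums at most `α`. -/
theorem stmt_7 (n m : ℕ) (w : Fin n → ℝ) (u : Fin m → ℝ)
    (supp : Fin m → Finset (Fin n))
    (hw : ∀ j, 0 < w j) (hu : ∀ i, 0 < u i)
    (hne : ∀ i, (supp i).Nonempty)
    (α : ℝ)
    (hmax : ∀ (V' : Finset (Fin n)) (E' : Finset (Fin m)),
      (∀ i ∈ E', supp i ⊆ V') →
      (∑ i ∈ E', u i) / (∑ j ∈ V', w j) ≤ α) :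
    ∃ A : Matrix (Fin m) (Fin n) ℝ,
      (∀ i j, 0 ≤ A i j) ∧
      (∀ i j, j ∉ supp i → A i j = 0) ∧
      (∀ i, ∑ j, w j * A i j = u i) ∧
      (∀ j, ∑ i, A i j ≤ α) := by
  classical
  have hα : 0 ≤ α := by simpa using hmax ∅ ∅ (by simp)
  set c : Fin n → ℝ := fun j => α * w j with hc
  set K : Set (Fin m → Fin n → ℝ) := {b | (∀ i j, 0 ≤ b i j) ∧ (∀ i j, j ∉ supp i → b i j = 0) ∧
      (∀ i, ∑ j, b i j ≤ u i) ∧ (∀ j, ∑ i, b i j ≤ c j)} with hK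
  have h0K : (0 : Fin m → Fin n → ℝ) ∈ K := by
    refine ⟨fun _ _ => le_refl _, fun _ _ _ => rfl, fun i => by simpa using (hu i).le,
      fun j => by simpa using mul_nonneg hα (hw j).le⟩
  have e1 : ∀ (i : Fin m) (j : Fin n), Continuous fun b : Fin m → Fin n → ℝ => b i j :=
    fun i j => (continuous_apply j).comp (continuous_apply i)
  have e2 : ∀ i : Fin m, Continuous fun b : Fin m → Fin n → ℝ => ∑ j, b i j :=
    fun i => continuous_finset_sum _ fun j _ => e1 i j
  have e3 : ∀ j : Fin n, Continuous fun b : Fin m → Fin n → ℝ => ∑ i, b i j :=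
    fun j => continuous_finset_sum _ fun i _ => e1 i j
  have hKclosed : IsClosed K := by
    have hKeq : K = (⋂ i, ⋂ j, {b : Fin m → Fin n → ℝ | 0 ≤ b i j}) ∩
        ((⋂ i, ⋂ j, {b : Fin m → Fin n → ℝ | j ∉ supp i → b i j = 0}) ∩
        ((⋂ i, {b : Fin m → Fin n → ℝ | ∑ j, b i j ≤ u i}) ∩
        (⋂ j, {b : Fin m → Fin n → ℝ | ∑ i, b i j ≤ c j}))) := by
      ext b
      simp only [hK, Set.mem_setOf_eq, Set.mem_inter_iff, Set.mem_iInter]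
    rw [hKeq]
    refine IsClosed.inter ?_ (IsClosed.inter ?_ (IsClosed.inter ?_ ?_))
    · exact isClosed_iInter fun i => isClosed_iInter fun j =>
        isClosed_le continuous_const (e1 i j)
    · refine isClosed_iInter fun i => isClosed_iInter fun j => ?_
      by_cases hj : j ∈ supp i
      · have : {b : Fin m → Fin n → ℝ | j ∉ supp i → b i j = 0} = Set.univ := by
          ext b; simp [hj]
        rw [this]; exact isClosed_univ
      · have : {b : Fin m → Fin n → ℝ | j ∉ supp i → b i j = 0} =
            {b : Fin m → Fin n → ℝ | b i j = 0} := by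
          ext b; simp [hj]
        rw [this]; exact isClosed_eq (e1 i j) continuous_const
    · exact isClosed_iInter fun i => isClosed_le (e2 i) continuous_const
    · exact isClosed_iInter fun j => isClosed_le (e3 j) continuous_const
  have hKsub : K ⊆ Set.Icc (fun _ _ => (0 : ℝ)) (fun _ j => c j) := by
    rintro b ⟨hb0, hbs, hrow, hcol⟩
    constructor
    · intro i j; exact hb0 i j
    · intro i j
      calc b i j ≤ ∑ i', b i' j :=
            Finset.single_le_sum (f := fun i' => b i' j) (fun i' _ => hb0 i' j) (mem_univ i)
        _ ≤ c j := hcol j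
  have hKcomp : IsCompact K :=
    IsCompact.of_isClosed_subset isCompact_Icc hKclosed hKsub
  obtain ⟨b, hbK, hbmax⟩ := hKcomp.exists_isMaxOn ⟨0, h0K⟩
    ((continuous_finset_sum _ fun i _ => e2 i).continuousOn)
  obtain ⟨hb0, hbs, hrowle, hcolle⟩ := hbK
  have hfull : ∀ i, ∑ j, b i j = u i := by
    by_contra hcon
    push_neg at hcon
    obtain ⟨i0, hi0⟩ := hcon
    have hdef : ∑ j, b i0 j < u i0 := lt_of_le_of_ne (hrowle i0) hi0
    -- saturation of reachable vertices
    have hsat : ∀ (S : Finset (Fin m)) (i : Fin m), HReach supp b i0 S i →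
        ∀ j ∈ supp i, ∑ i', b i' j = c j := by
      intro S i hr j hj
      by_contra hcne
      have hclt : ∑ i', b i' j < c j := lt_of_le_of_ne (hcolle j) hcne
      obtain ⟨ε, b', hε, hεle, h0', hs', hcol', hrow', hidef, -⟩ :=
        hr.augment hb0 hbs hrowle hdef (c j - ∑ i', b i' j) (by linarith)
      set b'' : Fin m → Fin n → ℝ := fun i'' j'' =>
        b' i'' j'' + if i'' = i then (if j'' = j then ε else 0) else 0 with hb''
      have hb''K : b'' ∈ K := by
        refine ⟨?_, ?_, ?_, ?_⟩
        · intro a d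
          by_cases ha : a = i
          · by_cases hd : d = j
            · have h9 := h0' a d
              simp only [hb'', if_pos ha, if_pos hd]
              linarith
            · simp [hb'', hd]; exact h0' a d
          · simp [hb'', ha]; exact h0' a d
        · intro a d hd
          by_cases ha : a = i
          · subst ha
            by_cases hdj : d = j
            · exact absurd hj (hdj ▸ hd)
            · simp [hb'', hdj]; exact hs' a d hd
          · simp [hb'', ha]; exact hs' a d hd
        · intro a
          by_cases ha : a = i
          · subst ha
            have : ∑ d, b'' a d = ∑ d, b' a d + ε := by
              simp only [hb'', if_pos rfl, Finset.sum_add_distrib,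
                Finset.sum_ite_eq' Finset.univ j]
              simp
            rw [this]; linarith [hidef]
          · have : ∑ d, b'' a d = ∑ d, b' a d := by
              simp [hb'', ha]
            rw [this]; exact hrow' a
        · intro d
          have hsum : ∑ a, b'' a d = ∑ a, b' a d + (if d = j then ε else 0) := by
            simp only [hb'', Finset.sum_add_distrib, Finset.sum_ite_eq' Finset.univ i]
            simp
          rw [hsum, hcol' d]
          by_cases hd : d = j
          · subst hd; simp; linarith
          · simp [hd]; exact hcolle d
      have hFgt : ∑ i', ∑ j', b i' j' < ∑ i', ∑ j', b'' i' j' := by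
        rw [Finset.sum_comm (f := fun i' j' => b'' i' j'), Finset.sum_comm]
        have : ∀ d, ∑ a, b'' a d = ∑ a, b a d + (if d = j then ε else 0) := by
          intro d
          have hsum : ∑ a, b'' a d = ∑ a, b' a d + (if d = j then ε else 0) := by
            simp only [hb'', Finset.sum_add_distrib, Finset.sum_ite_eq' Finset.univ i]
            simp
          rw [hsum, hcol' d]
        rw [Finset.sum_congr rfl fun d _ => this d, Finset.sum_add_distrib,
          Finset.sum_ite_eq' Finset.univ j]
        simp [hε]
      exact absurd (hbmax hb''K) (not_le.2 hFgt)
    -- the cut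
    set RE : Finset (Fin m) := univ.filter (fun i => ∃ S, HReach supp b i0 S i) with hRE
    set V' : Finset (Fin n) := RE.biUnion supp with hV'
    have hi0RE : i0 ∈ RE := mem_filter.2 ⟨mem_univ _, ⟨{i0}, HReach.base⟩⟩
    have hsubV : ∀ i ∈ RE, supp i ⊆ V' := fun i hi => subset_biUnion_of_mem supp hi
    have hzero : ∀ i, i ∉ RE → ∀ j ∈ V', b i j = 0 := by
      intro i hiRE j hjV
      by_contra hbne
      have hpos : 0 < b i j := lt_of_le_of_ne (hb0 i j) (Ne.symm hbne)
      obtain ⟨i'', hi''RE, hjsupp⟩ := Finset.mem_biUnion.1 hjV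
      obtain ⟨S, hr⟩ := (mem_filter.1 hi''RE).2
      by_cases hiS : i ∈ S
      · exact hiRE (mem_filter.2 ⟨mem_univ _, hr.mem.2 i hiS⟩)
      · exact hiRE (mem_filter.2 ⟨mem_univ _, ⟨_, HReach.step hr hjsupp hiS hpos⟩⟩)
    have hVsat : ∀ j ∈ V', ∑ i, b i j = c j := by
      intro j hjV
      obtain ⟨i'', hi''RE, hjsupp⟩ := Finset.mem_biUnion.1 hjV
      obtain ⟨S, hr⟩ := (mem_filter.1 hi''RE).2
      exact hsat S i'' hr j hjsupp
    have hkey : ∑ j ∈ V', c j < ∑ i ∈ RE, u i := by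
      have h1 : ∑ j ∈ V', c j = ∑ j ∈ V', ∑ i ∈ RE, b i j := by
        refine Finset.sum_congr rfl fun j hj => ?_
        rw [← hVsat j hj]
        exact (Finset.sum_subset (subset_univ RE) fun i _ hiRE => hzero i hiRE j hj).symm
      have h2 : ∑ j ∈ V', ∑ i ∈ RE, b i j = ∑ i ∈ RE, ∑ j, b i j := by
        rw [Finset.sum_comm]
        refine Finset.sum_congr rfl fun i hi => ?_
        exact Finset.sum_subset (subset_univ V') fun j _ hjV =>
          hbs i j (fun hjs => hjV (hsubV i hi hjs))
      rw [h1, h2]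
      exact Finset.sum_lt_sum (fun i _ => hrowle i) ⟨i0, hi0RE, hdef⟩
    have hwpos : 0 < ∑ j ∈ V', w j := by
      obtain ⟨j0, hj0⟩ := hne i0
      exact Finset.sum_pos' (fun j _ => (hw j).le) ⟨j0, hsubV i0 hi0RE hj0, hw j0⟩
    have hden := hmax V' RE hsubV
    rw [div_le_iff₀ hwpos] at hden
    have : ∑ j ∈ V', c j = α * ∑ j ∈ V', w j := by
      rw [Finset.mul_sum]
    linarith
  refine ⟨Matrix.of fun i j => b i j / w j, fun i j => div_nonneg (hb0 i j) (hw j).le,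
    fun i j hj => by simp [Matrix.of_apply, hbs i j hj], fun i => ?_, fun j => ?_⟩
  · have : ∀ j, w j * (b i j / w j) = b i j := fun j => by
      rw [mul_comm, div_mul_cancel₀ _ (hw j).ne']
    simp only [Matrix.of_apply]
    rw [Finset.sum_congr rfl fun j _ => this j]
    exact hfull i
  · simp only [Matrix.of_apply]
    rw [← Finset.sum_div, div_le_iff₀ (hw j)]
    exact hcolle j
end

section
/- If p_i ≥ 0, q_j ≥ 0 satisfy p_i ≤ q_j whenever v_j ∈ supp(e_i), and no subgraph of H has density exceeding α, then Σ_i u_i p_i ≤ α Σ_j w_j q_j. -/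
/-- If `p_i ≥ 0`, `q_j ≥ 0` satisfy `p_i ≤ q_j` whenever `v_j ∈ supp(e_i)`, and no subgraph of
`H` has density exceeding `α`, then `∑_i u_i p_i ≤ α ∑_j w_j q_j`. -/
theorem stmt_9 (n m : ℕ) (w : Fin n → ℝ) (u : Fin m → ℝ)
    (supp : Fin m → Finset (Fin n))
    (hw : ∀ j, 0 < w j) (hu : ∀ i, 0 < u i)
    (hne : ∀ i, (supp i).Nonempty)
    (α : ℝ)
    (hmax : ∀ (V' : Finset (Fin n)) (E' : Finset (Fin m)),
      (∀ i ∈ E', supp i ⊆ V') →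
      (∑ i ∈ E', u i) / (∑ j ∈ V', w j) ≤ α)
    (p : Fin m → ℝ) (q : Fin n → ℝ)
    (hp : ∀ i, 0 ≤ p i) (hq : ∀ j, 0 ≤ q j)
    (hpq : ∀ i, ∀ j ∈ supp i, p i ≤ q j) :
    ∑ i, u i * p i ≤ α * ∑ j, w j * q j := by
  have hα : 0 ≤ α := by simpa using hmax ∅ ∅ (by simp)
  -- key level-set inequality
  have key : ∀ (t : ℝ) (p : Fin m → ℝ) (q : Fin n → ℝ), 0 < t →
      (∀ i, ∀ j ∈ supp i, p i ≤ q j) →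
      ∑ i ∈ Finset.univ.filter (fun i => t ≤ p i), u i ≤
        α * ∑ j ∈ Finset.univ.filter (fun j => t ≤ q j), w j := by
    intro t p q ht hpq
    set E' := Finset.univ.filter (fun i => t ≤ p i) with hE'
    set V' := Finset.univ.filter (fun j => t ≤ q j) with hV'
    have hsub : ∀ i ∈ E', supp i ⊆ V' := by
      intro i hi j hj
      simp only [hE', Finset.mem_filter, Finset.mem_univ, true_and] at hi
      simp only [hV', Finset.mem_filter, Finset.mem_univ, true_and]
      exact le_trans hi (hpq i j hj)
    rcases E'.eq_empty_or_nonempty with hE | hE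
    · rw [hE]
      simp only [Finset.sum_empty]
      exact mul_nonneg hα (Finset.sum_nonneg fun j _ => (hw j).le)
    · obtain ⟨i0, hi0⟩ := hE
      obtain ⟨j0, hj0⟩ := hne i0
      have hj0V : j0 ∈ V' := hsub i0 hi0 hj0
      have hVpos : 0 < ∑ j ∈ V', w j :=
        Finset.sum_pos (fun j _ => hw j) ⟨j0, hj0V⟩
      have := hmax V' E' hsub
      rw [div_le_iff₀ hVpos] at this
      linarith [this]
  -- main induction on the number of positive p-values
  have main : ∀ (k : ℕ) (p : Fin m → ℝ) (q : Fin n → ℝ),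
      (∀ i, 0 ≤ p i) → (∀ j, 0 ≤ q j) →
      (∀ i, ∀ j ∈ supp i, p i ≤ q j) →
      (Finset.univ.filter fun i => 0 < p i).card ≤ k →
      ∑ i, u i * p i ≤ α * ∑ j, w j * q j := by
    intro k
    induction k with
    | zero =>
      intro p q hp hq hpq hcard
      have hz : ∀ i, p i = 0 := by
        intro i
        by_contra h
        have hpi : 0 < p i := lt_of_le_of_ne (hp i) (Ne.symm h)
        have hne' : (Finset.univ.filter fun i => 0 < p i).Nonempty :=
          ⟨i, by simp [hpi]⟩
        have := Finset.card_pos.mpr hne'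
        omega
      simp only [hz, mul_zero, Finset.sum_const_zero]
      exact mul_nonneg hα (Finset.sum_nonneg fun j _ => mul_nonneg (hw j).le (hq j))
    | succ k ih =>
      intro p q hp hq hpq hcard
      set S := Finset.univ.filter (fun i => 0 < p i) with hSdef
      rcases S.eq_empty_or_nonempty with hSe | hSne
      · exact ih p q hp hq hpq (by rw [← hSdef, hSe]; simp)
      · set t := S.inf' hSne p with htdef
        have htle : ∀ i ∈ S, t ≤ p i := fun i hi => Finset.inf'_le p hi
        have ht : 0 < t := by
          rw [htdef, Finset.lt_inf'_iff]
          intro i hi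
          simpa [hSdef] using (Finset.mem_filter.mp hi).2
        have hmemS : ∀ i, 0 < p i → i ∈ S := by
          intro i h; simp [hSdef, h]
        have hSeq : S = Finset.univ.filter fun i => t ≤ p i := by
          ext i
          simp only [hSdef, Finset.mem_filter, Finset.mem_univ, true_and]
          constructor
          · intro h; exact htle i (hmemS i h)
          · intro h; exact lt_of_lt_of_le ht h
        set p' := fun i => if 0 < p i then p i - t else 0 with hp'def
        set q' := fun j => if t ≤ q j then q j - t else q j with hq'def
        have hp' : ∀ i, 0 ≤ p' i := by
          intro i
          simp only [hp'def]
          split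
          · have := htle i (hmemS i (by assumption)); linarith
          · exact le_refl 0
        have hq' : ∀ j, 0 ≤ q' j := by
          intro j
          simp only [hq'def]
          split
          · linarith [ht]
          · exact hq j
        have hpq' : ∀ i, ∀ j ∈ supp i, p' i ≤ q' j := by
          intro i j hj
          simp only [hp'def, hq'def]
          by_cases h : 0 < p i
          · have h1 : t ≤ p i := htle i (hmemS i h)
            have h2 : t ≤ q j := h1.trans (hpq i j hj)
            simp only [h, if_pos, h2]
            linarith [hpq i j hj]
          · simp only [h, if_neg, if_false]
            split <;> [linarith [hpq i j hj, hq j]; exact hq j]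
        -- cardinality drops
        obtain ⟨i0, hi0S, hi0⟩ := Finset.exists_mem_eq_inf' hSne p
        have hcard' : (Finset.univ.filter fun i => 0 < p' i).card ≤ k := by
          have hsub2 : (Finset.univ.filter fun i => 0 < p' i) ⊆ S.erase i0 := by
            intro i hi
            simp only [Finset.mem_filter, Finset.mem_univ, true_and, hp'def] at hi
            by_cases h : 0 < p i
            · rw [if_pos h] at hi
              refine Finset.mem_erase.mpr ⟨?_, hmemS i h⟩
              intro heq
              rw [heq] at hi
              have : t = p i0 := hi0
              linarith
            · rw [if_neg h] at hi; linarith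
          have h1 := Finset.card_le_card hsub2
          have h2 : (S.erase i0).card = S.card - 1 := Finset.card_erase_of_mem hi0S
          have h3 : 0 < S.card := Finset.card_pos.mpr hSne
          omega
        have IH := ih p' q' hp' hq' hpq' hcard'
        have hKey := key t p q ht hpq
        rw [← hSeq] at hKey
        -- decompositions
        have hdp : ∑ i, u i * p i = ∑ i, u i * p' i + t * ∑ i ∈ S, u i := by
          have : ∀ i ∈ Finset.univ, u i * p i
              = u i * p' i + (if 0 < p i then u i * t else 0) := by
            intro i _
            simp only [hp'def]
            by_cases h : 0 < p i
            · simp only [if_pos h]; ring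
            · have hz : p i = 0 := le_antisymm (not_lt.mp h) (hp i)
              simp [h, hz]
          rw [Finset.sum_congr rfl this, Finset.sum_add_distrib]
          congr 1
          rw [← Finset.sum_filter, ← hSdef, Finset.mul_sum]
          exact Finset.sum_congr rfl fun i _ => by ring
        have hdq : ∑ j, w j * q j = ∑ j, w j * q' j
            + t * ∑ j ∈ Finset.univ.filter (fun j => t ≤ q j), w j := by
          have : ∀ j ∈ Finset.univ, w j * q j
              = w j * q' j + (if t ≤ q j then w j * t else 0) := by
            intro j _
            simp only [hq'def]
            by_cases h : t ≤ q j <;> simp [h] <;> ring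
          rw [Finset.sum_congr rfl this, Finset.sum_add_distrib]
          congr 1
          rw [← Finset.sum_filter, Finset.mul_sum]
          exact Finset.sum_congr rfl fun j _ => by ring
        have hmul : t * ∑ i ∈ S, u i
            ≤ t * (α * ∑ j ∈ Finset.univ.filter (fun j => t ≤ q j), w j) :=
          mul_le_mul_of_nonneg_left hKey ht.le
        rw [hdp, hdq]
        nlinarith [IH, hmul]
  exact main (Finset.univ.filter fun i => 0 < p i).card p q hp hq hpq le_rfl
end

section
/- Let H' = (V',E') be a subgraph of H of density α, and let A be a support matrix for H whose column sum s_j(A) = α for every v_j ∈ V'. Then A has block structure: a_{ij} = 0 whenever (v_j ∈ V' and e_i ∉ E') or (v_j ∉ V' and e_i ∈ E'). -/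
/-- Block structure: if `H' = (V', E')` is a subgraph of `H` of density `α` (with no subgraph of
`H` of density exceeding `α`) and `A` is a support matrix whose column sums equal `α` on every
column of `V'`, then `a_{ij} = 0` whenever (`v_j ∈ V'` and `e_i ∉ E'`) or
(`v_j ∉ V'` and `e_i ∈ E'`). -/
theorem stmt_10 (n m : ℕ) (w : Fin n → ℝ) (u : Fin m → ℝ)
    (supp : Fin m → Finset (Fin n))
    (hw : ∀ j, 0 < w j) (hu : ∀ i, 0 < u i)
    (α : ℝ)
    (hmax : ∀ (V'' : Finset (Fin n)) (E'' : Finset (Fin m)),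
      (∀ i ∈ E'', supp i ⊆ V'') →
      (∑ i ∈ E'', u i) / (∑ j ∈ V'', w j) ≤ α)
    (V' : Finset (Fin n)) (E' : Finset (Fin m))
    (hsub : ∀ i ∈ E', supp i ⊆ V') (hVne : V'.Nonempty)
    (hdens : (∑ i ∈ E', u i) / (∑ j ∈ V', w j) = α)
    (A : Matrix (Fin m) (Fin n) ℝ)
    (hA0 : ∀ i j, 0 ≤ A i j)
    (hAz : ∀ i j, j ∉ supp i → A i j = 0)
    (hArow : ∀ i, ∑ j, w j * A i j = u i)
    (hcol : ∀ j ∈ V', ∑ i, A i j = α) :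
    ∀ i j, ((j ∈ V' ∧ i ∉ E') ∨ (j ∉ V' ∧ i ∈ E')) → A i j = 0 := by
  intro i j hij
  rcases hij with ⟨hjV, hiE⟩ | ⟨hjV, hiE⟩
  · have hS : 0 < ∑ j ∈ V', w j := Finset.sum_pos (fun j _ => hw j) hVne
    rw [div_eq_iff hS.ne'] at hdens
    have hEi : ∀ i ∈ E', ∑ j ∈ V', w j * A i j = u i := by
      intro i hi
      rw [← hArow i]
      exact Finset.sum_subset (Finset.subset_univ _) (fun x _ hx => by
        rw [hAz i x (fun hs => hx (hsub i hi hs)), mul_zero])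
    have htot : ∑ i, ∑ j ∈ V', w j * A i j = α * ∑ j ∈ V', w j := by
      rw [Finset.sum_comm]
      calc ∑ j ∈ V', ∑ i, w j * A i j = ∑ j ∈ V', w j * α := by
            refine Finset.sum_congr rfl fun j hj => ?_
            rw [← Finset.mul_sum, hcol j hj]
        _ = α * ∑ j ∈ V', w j := by rw [← Finset.sum_mul, mul_comm]
    have hsplit : ∑ i ∈ E'ᶜ, ∑ j ∈ V', w j * A i j = 0 := by
      have hadd := Finset.sum_add_sum_compl E' (fun i => ∑ j ∈ V', w j * A i j)
      have h1 : ∑ i ∈ E', ∑ j ∈ V', w j * A i j = ∑ i ∈ E', u i :=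
        Finset.sum_congr rfl hEi
      linarith [hadd, h1, htot, hdens]
    have hnn : ∀ i ∈ E'ᶜ, 0 ≤ ∑ j ∈ V', w j * A i j :=
      fun i _ => Finset.sum_nonneg fun j _ => mul_nonneg (hw j).le (hA0 i j)
    have hz := (Finset.sum_eq_zero_iff_of_nonneg hnn).mp hsplit i (Finset.mem_compl.mpr hiE)
    have hzz := (Finset.sum_eq_zero_iff_of_nonneg
      (fun j _ => mul_nonneg (hw j).le (hA0 i j))).mp hz j hjV
    exact (mul_eq_zero.mp hzz).resolve_left (hw j).ne'
  · exact hAz i j (fun hs => hjV (hsub i hiE hs))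
end

section
/- For any support matrix A and any subgraph H' = (V',E') of H, α(H') ≤ ‖Ã^T Ã‖, where Ã = U^{-1/2} A W^{1/2}, U and W being the diagonal matrices of hyperedge and vertex weights. -/
/-!
Test the Rayleigh quotient of `ÃᵀÃ` on `x = W^{1/2} 1_{V'}`. Every hyperedge of `E'` lies inside
`V'`, so the row condition `∑ⱼ wⱼ aᵢⱼ = uᵢ` gives `(Ã x)ᵢ = √uᵢ` for `i ∈ E'`; hence
`wt(E') ≤ ‖Ã x‖² = ⟪x, ÃᵀÃ x⟫ ≤ ‖ÃᵀÃ‖ ‖x‖² = ‖ÃᵀÃ‖ wt(V')`.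
-/

open Matrix in
/-- The operator norm (on Euclidean spaces) of a real matrix. -/
noncomputable def matOpNorm {a b : ℕ} (B : Matrix (Fin a) (Fin b) ℝ) : ℝ :=
  ‖LinearMap.toContinuousLinearMap (Matrix.toEuclideanLin B)‖

open Matrix

theorem dotProduct_mulVec_le_matOpNorm_mul {a : ℕ} (M : Matrix (Fin a) (Fin a) ℝ)
    (x : Fin a → ℝ) : x ⬝ᵥ (M *ᵥ x) ≤ matOpNorm M * (x ⬝ᵥ x) := by
  set f := LinearMap.toContinuousLinearMap (Matrix.toEuclideanLin M)
  set y : EuclideanSpace ℝ (Fin a) := WithLp.toLp 2 x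
  have hquad : x ⬝ᵥ (M *ᵥ x) = inner ℝ y (f y) := by
    simp [f, y, EuclideanSpace.inner_toLp_toLp, dotProduct_comm]
  have hnorm : x ⬝ᵥ x = ‖y‖ ^ 2 := by
    rw [EuclideanSpace.real_norm_sq_eq]; simp [y, dotProduct, sq]
  calc x ⬝ᵥ (M *ᵥ x) = inner ℝ y (f y) := hquad
    _ ≤ ‖y‖ * ‖f y‖ := real_inner_le_norm y (f y)
    _ ≤ ‖y‖ * (‖f‖ * ‖y‖) := mul_le_mul_of_nonneg_left (f.le_opNorm y) (norm_nonneg y)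
    _ = matOpNorm M * (x ⬝ᵥ x) := by rw [hnorm, matOpNorm]; ring

theorem dotProduct_self_mulVec_le_matOpNorm_transpose_mul {a b : ℕ}
    (B : Matrix (Fin b) (Fin a) ℝ) (x : Fin a → ℝ) :
    (B *ᵥ x) ⬝ᵥ (B *ᵥ x) ≤ matOpNorm (Bᵀ * B) * (x ⬝ᵥ x) := by
  calc (B *ᵥ x) ⬝ᵥ (B *ᵥ x) = x ⬝ᵥ ((Bᵀ * B) *ᵥ x) := by
        rw [← mulVec_mulVec, dotProduct_mulVec x, vecMul_transpose]
    _ ≤ _ := dotProduct_mulVec_le_matOpNorm_mul _ x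

section Hypergraph

variable {ι κ : Type*} [DecidableEq κ]

noncomputable def sqrtWeightIndicator (w : κ → ℝ) (V' : Finset κ) : κ → ℝ :=
  fun j => if j ∈ V' then √(w j) else 0

theorem sqrt_mul_sqrtWeightIndicator {w : κ → ℝ} (hw : ∀ j, 0 ≤ w j) (V' : Finset κ) (j : κ) :
    √(w j) * sqrtWeightIndicator w V' j = if j ∈ V' then w j else 0 := by
  unfold sqrtWeightIndicator
  split_ifs
  · exact Real.mul_self_sqrt (hw j)
  · exact mul_zero _

theorem dotProduct_self_sqrtWeightIndicator [Fintype κ] {w : κ → ℝ} (hw : ∀ j, 0 ≤ w j)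
    (V' : Finset κ) :
    sqrtWeightIndicator w V' ⬝ᵥ sqrtWeightIndicator w V' = ∑ j ∈ V', w j := by
  have hsq (j : κ) : sqrtWeightIndicator w V' j * sqrtWeightIndicator w V' j =
      √(w j) * sqrtWeightIndicator w V' j := by
    unfold sqrtWeightIndicator; split_ifs <;> simp
  simp only [dotProduct, hsq, sqrt_mul_sqrtWeightIndicator hw, Finset.sum_ite_mem,
    Finset.univ_inter]

theorem mulVec_sqrtWeightIndicator [Fintype ι] [Fintype κ] [DecidableEq ι] (w : κ → ℝ)
    (u : ι → ℝ) (A : Matrix ι κ ℝ) (V' : Finset κ) (hw : ∀ j, 0 ≤ w j) (i : ι)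
    (hrow : ∑ j, w j * A i j = u i) (hAz : ∀ j ∉ V', A i j = 0) :
    ((diagonal (fun i => (√(u i))⁻¹) * A * diagonal (fun j => √(w j))) *ᵥ
      sqrtWeightIndicator w V') i = √(u i) := by
  have hscale : (diagonal fun j => √(w j)) *ᵥ sqrtWeightIndicator w V' =
      fun j => if j ∈ V' then w j else 0 := by
    ext j; rw [mulVec_diagonal, sqrt_mul_sqrtWeightIndicator hw]
  have hrow' : (A *ᵥ fun j => if j ∈ V' then w j else 0) i = u i := by
    rw [← hrow]
    refine Finset.sum_congr rfl fun j _ => ?_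
    by_cases hj : j ∈ V' <;> simp [hj, hAz, mul_comm]
  rw [← mulVec_mulVec, ← mulVec_mulVec, hscale, mulVec_diagonal, hrow', inv_mul_eq_div,
    Real.div_sqrt]

end Hypergraph

open Matrix in
theorem stmt_13_general (n m : ℕ) (w : Fin n → ℝ) (u : Fin m → ℝ)
    (supp : Fin m → Finset (Fin n))
    (hw : ∀ j, 0 < w j) (hu : ∀ i, 0 < u i)
    (A : Matrix (Fin m) (Fin n) ℝ)
    (hAz : ∀ i j, j ∉ supp i → A i j = 0)
    (hArow : ∀ i, ∑ j, w j * A i j = u i)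
    (V' : Finset (Fin n)) (E' : Finset (Fin m))
    (hsub : ∀ i ∈ E', supp i ⊆ V') :
    (∑ i ∈ E', u i) / (∑ j ∈ V', w j) ≤
      matOpNorm ((Matrix.diagonal (fun i => (Real.sqrt (u i))⁻¹) * A *
        Matrix.diagonal (fun j => Real.sqrt (w j)))ᵀ *
        (Matrix.diagonal (fun i => (Real.sqrt (u i))⁻¹) * A *
        Matrix.diagonal (fun j => Real.sqrt (w j)))) := by
  have hw₀ (j : Fin n) : 0 ≤ w j := (hw j).le
  refine div_le_of_le_mul₀ (Finset.sum_nonneg fun j _ => hw₀ j) (norm_nonneg _) ?_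
  set B := diagonal (fun i => (√(u i))⁻¹) * A * diagonal (fun j => √(w j))
  set x := sqrtWeightIndicator w V'
  have hBx (i : Fin m) (hi : i ∈ E') : (B *ᵥ x) i * (B *ᵥ x) i = u i := by
    rw [mulVec_sqrtWeightIndicator w u A V' hw₀ i (hArow i)
      fun j hj => hAz i j fun hji => hj (hsub i hi hji)]
    exact Real.mul_self_sqrt (hu i).le
  calc ∑ i ∈ E', u i = ∑ i ∈ E', (B *ᵥ x) i * (B *ᵥ x) i := (Finset.sum_congr rfl hBx).symm
    _ ≤ (B *ᵥ x) ⬝ᵥ (B *ᵥ x) :=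
      Finset.sum_le_sum_of_subset_of_nonneg (Finset.subset_univ E')
        fun i _ _ => mul_self_nonneg _
    _ ≤ matOpNorm (Bᵀ * B) * (x ⬝ᵥ x) := dotProduct_self_mulVec_le_matOpNorm_transpose_mul B x
    _ = matOpNorm (Bᵀ * B) * ∑ j ∈ V', w j := by rw [dotProduct_self_sqrtWeightIndicator hw₀]

open Matrix in
/-- For any support matrix `A` and any subgraph `H' = (V', E')` of `H`,
`α(H') ≤ ‖Ãᵀ Ã‖` where `Ã = U^{-1/2} A W^{1/2}`, `U`, `W` the diagonal weight matrices. -/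
theorem stmt_13 (n m : ℕ) (w : Fin n → ℝ) (u : Fin m → ℝ)
    (supp : Fin m → Finset (Fin n))
    (hw : ∀ j, 0 < w j) (hu : ∀ i, 0 < u i)
    (A : Matrix (Fin m) (Fin n) ℝ)
    (hA0 : ∀ i j, 0 ≤ A i j)
    (hAz : ∀ i j, j ∉ supp i → A i j = 0)
    (hArow : ∀ i, ∑ j, w j * A i j = u i)
    (V' : Finset (Fin n)) (E' : Finset (Fin m))
    (hsub : ∀ i ∈ E', supp i ⊆ V') (hVne : V'.Nonempty) :
    (∑ i ∈ E', u i) / (∑ j ∈ V', w j) ≤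
      matOpNorm ((Matrix.diagonal (fun i => (Real.sqrt (u i))⁻¹) * A *
        Matrix.diagonal (fun j => Real.sqrt (w j)))ᵀ *
        (Matrix.diagonal (fun i => (Real.sqrt (u i))⁻¹) * A *
        Matrix.diagonal (fun j => Real.sqrt (w j)))) :=
  stmt_13_general n m w u supp hw hu A hAz hArow V' E' hsub
end

section
/- Suppose α_1 > α_2 > ... > α_k, and partitions V = V_1 ∪̇ ... ∪̇ V_k, E = E_1 ∪̇ ... ∪̇ E_k are such that for each t, (∪_{r≤t} V_r, ∪_{r≤t} E_r) is a subgraph of H and wt(E_r)/wt(V_r) = α_r. If there exists a support matrix A with s_j(A) = α_r for every v_j ∈ V_r, then this partition is the spectral decomposition of H: for each t, (V_t, E_t) is the unique maximal densest subgraph of the quotient H / (∪_{r<t} (V_r,E_r)). -/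
/-- Recovering the spectral decomposition from an optimal support matrix: if
`α₁ > α₂ > ... > α_k`, the partitions `V = V₁ ∪̇ ... ∪̇ V_k`, `E = E₁ ∪̇ ... ∪̇ E_k` are such
that each `(∪_{r≤t} V_r, ∪_{r≤t} E_r)` is a subgraph of `H` with `wt(E_r)/wt(V_r) = α_r`, and
there is a support matrix `A` with column sum `s_j(A) = α_r` for every `v_j ∈ V_r`, then this
partition is the spectral decomposition of `H`: for each `t`, `(V_t, E_t)` is the unique
maximal subgraph of maximum density `α_t` of the quotient of `H` by `∪_{r<t} (V_r, E_r)`. -/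
theorem stmt_15 (n m k : ℕ) (w : Fin n → ℝ) (u : Fin m → ℝ)
    (supp : Fin m → Finset (Fin n))
    (hw : ∀ j, 0 < w j) (hu : ∀ i, 0 < u i)
    (α : Fin k → ℝ) (hα : StrictAnti α)
    (Vp : Fin k → Finset (Fin n)) (Ep : Fin k → Finset (Fin m))
    (hVd : ∀ r s, r ≠ s → Disjoint (Vp r) (Vp s))
    (hEd : ∀ r s, r ≠ s → Disjoint (Ep r) (Ep s))
    (hVu : Finset.univ.biUnion Vp = Finset.univ)
    (hEu : Finset.univ.biUnion Ep = Finset.univ)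
    (hVne : ∀ r, (Vp r).Nonempty)
    (hsub : ∀ t : Fin k, ∀ i ∈ (Finset.univ.filter (fun r => r ≤ t)).biUnion Ep,
        supp i ⊆ (Finset.univ.filter (fun r => r ≤ t)).biUnion Vp)
    (hdens : ∀ r, (∑ i ∈ Ep r, u i) / (∑ j ∈ Vp r, w j) = α r)
    (A : Matrix (Fin m) (Fin n) ℝ)
    (hA0 : ∀ i j, 0 ≤ A i j)
    (hAz : ∀ i j, j ∉ supp i → A i j = 0)
    (hArow : ∀ i, ∑ j, w j * A i j = u i)
    (hcol : ∀ r, ∀ j ∈ Vp r, ∑ i, A i j = α r) :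
    ∀ t : Fin k,
      -- the remaining (quotient) vertex and edge sets after removing the parts `r < t`
      (fun (RV : Finset (Fin n)) (RE : Finset (Fin m)) =>
        -- `(V_t, E_t)` is a subgraph of the quotient hypergraph of density `α t`
        (Vp t ⊆ RV ∧ Ep t ⊆ RE ∧
          (∀ i ∈ Ep t, ∀ j ∈ supp i, j ∈ RV → j ∈ Vp t)) ∧
        -- every subgraph of the quotient has density at most `α t`
        (∀ (V' : Finset (Fin n)) (E' : Finset (Fin m)),
          V' ⊆ RV → E' ⊆ RE → (∀ i ∈ E', ∀ j ∈ supp i, j ∈ RV → j ∈ V') →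
          (∑ i ∈ E', u i) / (∑ j ∈ V', w j) ≤ α t) ∧
        -- every nonempty subgraph of the quotient of density `α t` is contained in `(V_t, E_t)`
        (∀ (V' : Finset (Fin n)) (E' : Finset (Fin m)),
          V' ⊆ RV → E' ⊆ RE → (∀ i ∈ E', ∀ j ∈ supp i, j ∈ RV → j ∈ V') →
          V'.Nonempty → (∑ i ∈ E', u i) / (∑ j ∈ V', w j) = α t →
          V' ⊆ Vp t ∧ E' ⊆ Ep t))
      (Finset.univ \ (Finset.univ.filter (fun r => r < t)).biUnion Vp)
      (Finset.univ \ (Finset.univ.filter (fun r => r < t)).biUnion Ep) := by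
  classical
  -- basic facts
  have hVmem : ∀ j : Fin n, ∃ r, j ∈ Vp r := by
    intro j
    have hj : j ∈ Finset.univ.biUnion Vp := hVu ▸ Finset.mem_univ j
    simpa using hj
  have hEmem : ∀ i : Fin m, ∃ r, i ∈ Ep r := by
    intro i
    have hi : i ∈ Finset.univ.biUnion Ep := hEu ▸ Finset.mem_univ i
    simpa using hi
  have hVuniq : ∀ {r s : Fin k} {j : Fin n}, j ∈ Vp r → j ∈ Vp s → r = s := by
    intro r s j hr hs
    by_contra h
    exact Finset.disjoint_left.mp (hVd r s h) hr hs
  have hEuniq : ∀ {r s : Fin k} {i : Fin m}, i ∈ Ep r → i ∈ Ep s → r = s := by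
    intro r s i hr hs
    by_contra h
    exact Finset.disjoint_left.mp (hEd r s h) hr hs
  have hwV : ∀ r, 0 < ∑ j ∈ Vp r, w j :=
    fun r => Finset.sum_pos (fun j _ => hw j) (hVne r)
  have hEq : ∀ r, ∑ i ∈ Ep r, u i = α r * ∑ j ∈ Vp r, w j := by
    intro r
    have := hdens r
    rw [div_eq_iff (ne_of_gt (hwV r))] at this
    exact this
  have hα0 : ∀ r, 0 ≤ α r := by
    intro r
    rw [← hdens r]
    exact div_nonneg (Finset.sum_nonneg fun i _ => (hu i).le) (hwV r).le
  -- the key structural lemma: A is block lower-triangular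
  have key : ∀ (r s : Fin k), s < r → ∀ j ∈ Vp s, ∀ i ∈ Ep r, A i j = 0 := by
    intro r s hsr j hj i hi
    set U := (Finset.univ.filter (fun x => x < r)).biUnion Vp with hU
    set F := (Finset.univ.filter (fun x => x < r)).biUnion Ep with hF
    have hjU : j ∈ U := by
      simp only [hU, Finset.mem_biUnion, Finset.mem_filter, Finset.mem_univ, true_and]
      exact ⟨s, hsr, hj⟩
    have hiF : i ∉ F := by
      simp only [hF, Finset.mem_biUnion, Finset.mem_filter, Finset.mem_univ, true_and]
      rintro ⟨r', hr', hir'⟩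
      exact absurd (hEuniq hir' hi) (ne_of_lt hr')
    have hdisjV : (↑(Finset.univ.filter (fun x : Fin k => x < r)) : Set (Fin k)).PairwiseDisjoint Vp :=
      fun x _ y _ hxy => hVd x y hxy
    have hdisjE : (↑(Finset.univ.filter (fun x : Fin k => x < r)) : Set (Fin k)).PairwiseDisjoint Ep :=
      fun x _ y _ hxy => hEd x y hxy
    -- total column mass on U
    have hS1 : ∑ j' ∈ U, w j' * ∑ i', A i' j'
        = ∑ x ∈ Finset.univ.filter (fun x => x < r), α x * ∑ j' ∈ Vp x, w j' := by
      rw [hU, Finset.sum_biUnion hdisjV]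
      refine Finset.sum_congr rfl fun x _ => ?_
      rw [Finset.mul_sum]
      refine Finset.sum_congr rfl fun j' hj' => ?_
      rw [hcol x j' hj']
      ring
    -- mass from F alone already accounts for all of it
    have hS2 : ∑ j' ∈ U, w j' * ∑ i' ∈ F, A i' j'
        = ∑ x ∈ Finset.univ.filter (fun x => x < r), α x * ∑ j' ∈ Vp x, w j' := by
      have h1 : ∑ j' ∈ U, w j' * ∑ i' ∈ F, A i' j' = ∑ i' ∈ F, ∑ j' ∈ U, w j' * A i' j' := by
        rw [Finset.sum_comm]
        refine Finset.sum_congr rfl fun j' _ => ?_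
        rw [Finset.mul_sum]
      rw [h1]
      have h2 : ∀ i' ∈ F, ∑ j' ∈ U, w j' * A i' j' = u i' := by
        intro i' hi'
        rw [← hArow i']
        refine Finset.sum_subset (Finset.subset_univ U) ?_
        intro j' _ hj'U
        by_cases hjs : j' ∈ supp i'
        · exfalso
          simp only [hF, Finset.mem_biUnion, Finset.mem_filter, Finset.mem_univ, true_and] at hi'
          obtain ⟨t', ht', hit'⟩ := hi'
          have hisub : i' ∈ (Finset.univ.filter (fun x => x ≤ t')).biUnion Ep := by
            simp only [Finset.mem_biUnion, Finset.mem_filter, Finset.mem_univ, true_and]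
            exact ⟨t', le_refl t', hit'⟩
          have := hsub t' i' hisub hjs
          simp only [Finset.mem_biUnion, Finset.mem_filter, Finset.mem_univ, true_and] at this
          obtain ⟨x, hx, hjx⟩ := this
          apply hj'U
          simp only [hU, Finset.mem_biUnion, Finset.mem_filter, Finset.mem_univ, true_and]
          exact ⟨x, lt_of_le_of_lt hx ht', hjx⟩
        · rw [hAz i' j' hjs, mul_zero]
      rw [Finset.sum_congr rfl h2, hF, Finset.sum_biUnion hdisjE]
      exact Finset.sum_congr rfl fun x _ => hEq x
    -- hence the complement edges contribute zero mass on U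
    have hzero : ∑ j' ∈ U, w j' * ∑ i' ∈ Fᶜ, A i' j' = 0 := by
      have hsplit : ∑ j' ∈ U, w j' * ∑ i' ∈ Fᶜ, A i' j'
          = (∑ j' ∈ U, w j' * ∑ i', A i' j') - ∑ j' ∈ U, w j' * ∑ i' ∈ F, A i' j' := by
        rw [← Finset.sum_sub_distrib]
        refine Finset.sum_congr rfl fun j' _ => ?_
        rw [← mul_sub]
        congr 1
        rw [← Finset.sum_add_sum_compl F (fun i' => A i' j')]
        ring
      rw [hsplit, hS1, hS2, sub_self]
    have hterm : w j * ∑ i' ∈ Fᶜ, A i' j = 0 := by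
      have := (Finset.sum_eq_zero_iff_of_nonneg
        (fun j' _ => mul_nonneg (hw j').le
          (Finset.sum_nonneg fun i' _ => hA0 i' j'))).mp hzero
      exact this j hjU
    have hsum0 : ∑ i' ∈ Fᶜ, A i' j = 0 := by
      rcases mul_eq_zero.mp hterm with h | h
      · exact absurd h (ne_of_gt (hw j))
      · exact h
    have := (Finset.sum_eq_zero_iff_of_nonneg (fun i' _ => hA0 i' j)).mp hsum0
    exact this i (Finset.mem_compl.mpr hiF)
  -- now the main goal
  intro t
  set RV := Finset.univ \ (Finset.univ.filter (fun r => r < t)).biUnion Vp with hRV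
  set RE := Finset.univ \ (Finset.univ.filter (fun r => r < t)).biUnion Ep with hRE
  have hVin : ∀ (s : Fin k) (j : Fin n), t ≤ s → j ∈ Vp s → j ∈ RV := by
    intro s j hts hjs
    rw [hRV, Finset.mem_sdiff]
    refine ⟨Finset.mem_univ j, ?_⟩
    simp only [Finset.mem_biUnion, Finset.mem_filter, Finset.mem_univ, true_and]
    rintro ⟨x, hx, hjx⟩
    exact absurd (hVuniq hjx hjs) (ne_of_lt (lt_of_lt_of_le hx hts))
  have hEin : ∀ (r : Fin k) (i : Fin m), t ≤ r → i ∈ Ep r → i ∈ RE := by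
    intro r i htr hir
    rw [hRE, Finset.mem_sdiff]
    refine ⟨Finset.mem_univ i, ?_⟩
    simp only [Finset.mem_biUnion, Finset.mem_filter, Finset.mem_univ, true_and]
    rintro ⟨x, hx, hix⟩
    exact absurd (hEuniq hix hir) (ne_of_lt (lt_of_lt_of_le hx htr))
  have hVclass : ∀ j ∈ RV, ∃ s, t ≤ s ∧ j ∈ Vp s := by
    intro j hj
    obtain ⟨s, hjs⟩ := hVmem j
    refine ⟨s, ?_, hjs⟩
    by_contra h
    push_neg at h
    rw [hRV, Finset.mem_sdiff] at hj
    exact hj.2 (by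
      simp only [Finset.mem_biUnion, Finset.mem_filter, Finset.mem_univ, true_and]
      exact ⟨s, h, hjs⟩)
  have hEclass : ∀ i ∈ RE, ∃ r, t ≤ r ∧ i ∈ Ep r := by
    intro i hi
    obtain ⟨r, hir⟩ := hEmem i
    refine ⟨r, ?_, hir⟩
    by_contra h
    push_neg at h
    rw [hRE, Finset.mem_sdiff] at hi
    exact hi.2 (by
      simp only [Finset.mem_biUnion, Finset.mem_filter, Finset.mem_univ, true_and]
      exact ⟨r, h, hir⟩)
  have hcolfull : ∀ (E' : Finset (Fin m)) (j : Fin n) (s : Fin k), j ∈ Vp s →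
      ∑ i ∈ E', A i j ≤ α s := by
    intro E' j s hjs
    have h := Finset.sum_le_univ_sum_of_nonneg (s := E') (f := fun i => A i j)
      (fun i => hA0 i j)
    rwa [hcol s j hjs] at h
  have hcolle : ∀ (E' : Finset (Fin m)) (j : Fin n) (s : Fin k), t ≤ s → j ∈ Vp s →
      ∑ i ∈ E', A i j ≤ α t :=
    fun E' j s hts hjs => (hcolfull E' j s hjs).trans (hα.antitone hts)
  have hsum : ∀ (V' : Finset (Fin n)) (E' : Finset (Fin m)), E' ⊆ RE →
      (∀ i ∈ E', ∀ j ∈ supp i, j ∈ RV → j ∈ V') →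
      ∑ i ∈ E', u i = ∑ j ∈ V', w j * ∑ i ∈ E', A i j := by
    intro V' E' hE' hclo
    have h1 : ∑ i ∈ E', u i = ∑ i ∈ E', ∑ j, w j * A i j :=
      Finset.sum_congr rfl fun i _ => (hArow i).symm
    rw [h1, Finset.sum_comm]
    have h2 : ∀ j ∈ Finset.univ, j ∉ V' → ∑ i ∈ E', w j * A i j = 0 := by
      intro j _ hjV'
      apply Finset.sum_eq_zero
      intro i hiE'
      obtain ⟨r, htr, hir⟩ := hEclass i (hE' hiE')
      obtain ⟨s, hjs⟩ := hVmem j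
      by_cases hst : s < t
      · rw [key r s (lt_of_lt_of_le hst htr) j hjs i hir, mul_zero]
      · push_neg at hst
        by_cases hsupp : j ∈ supp i
        · exact absurd (hclo i hiE' j hsupp (hVin s j hst hjs)) hjV'
        · rw [hAz i j hsupp, mul_zero]
    rw [← Finset.sum_subset (Finset.subset_univ V') h2]
    exact Finset.sum_congr rfl fun j _ => (Finset.mul_sum _ _ _).symm
  refine ⟨⟨?_, ?_, ?_⟩, ?_, ?_⟩
  · exact fun j hj => hVin t j (le_refl t) hj
  · exact fun i hi => hEin t i (le_refl t) hi
  · intro i hi j hjs hjRV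
    have hisub : i ∈ (Finset.univ.filter (fun x => x ≤ t)).biUnion Ep := by
      simp only [Finset.mem_biUnion, Finset.mem_filter, Finset.mem_univ, true_and]
      exact ⟨t, le_refl t, hi⟩
    have h := hsub t i hisub hjs
    simp only [Finset.mem_biUnion, Finset.mem_filter, Finset.mem_univ, true_and] at h
    obtain ⟨x, hx, hjx⟩ := h
    obtain ⟨s, hts, hjs'⟩ := hVclass j hjRV
    have hxs : x = s := hVuniq hjx hjs'
    have : x = t := le_antisymm hx (hxs ▸ hts)
    rwa [← this]
  · intro V' E' hV' hE' hclo
    have hb : ∑ i ∈ E', u i ≤ α t * ∑ j ∈ V', w j := by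
      rw [hsum V' E' hE' hclo, Finset.mul_sum]
      refine Finset.sum_le_sum fun j hj => ?_
      obtain ⟨s, hts, hjs⟩ := hVclass j (hV' hj)
      calc w j * ∑ i ∈ E', A i j ≤ w j * α t :=
            mul_le_mul_of_nonneg_left (hcolle E' j s hts hjs) (hw j).le
        _ = α t * w j := mul_comm _ _
    rcases V'.eq_empty_or_nonempty with h | h
    · rw [h, Finset.sum_empty, div_zero]
      exact hα0 t
    · have hpos : 0 < ∑ j ∈ V', w j := Finset.sum_pos (fun j _ => hw j) h
      rw [div_le_iff₀ hpos]
      linarith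
  · intro V' E' hV' hE' hclo hne hdens'
    have hpos : 0 < ∑ j ∈ V', w j := Finset.sum_pos (fun j _ => hw j) hne
    rw [div_eq_iff (ne_of_gt hpos)] at hdens'
    have heq : ∑ i ∈ E', u i = α t * ∑ j ∈ V', w j := by linarith
    have hz : ∑ j ∈ V', w j * (α t - ∑ i ∈ E', A i j) = 0 := by
      have hs := hsum V' E' hE' hclo
      have : ∑ j ∈ V', w j * (α t - ∑ i ∈ E', A i j)
          = α t * ∑ j ∈ V', w j - ∑ j ∈ V', w j * ∑ i ∈ E', A i j := by
        rw [Finset.mul_sum, ← Finset.sum_sub_distrib]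
        exact Finset.sum_congr rfl fun j _ => by ring
      rw [this, ← hs, ← heq, sub_self]
    have hnn : ∀ j ∈ V', 0 ≤ w j * (α t - ∑ i ∈ E', A i j) := by
      intro j hj
      obtain ⟨s, hts, hjs⟩ := hVclass j (hV' hj)
      have := hcolle E' j s hts hjs
      exact mul_nonneg (hw j).le (by linarith)
    have hcoleq : ∀ j ∈ V', ∑ i ∈ E', A i j = α t := by
      intro j hj
      have h0 := (Finset.sum_eq_zero_iff_of_nonneg hnn).mp hz j hj
      rcases mul_eq_zero.mp h0 with h | h
      · exact absurd h (ne_of_gt (hw j))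
      · linarith
    have hVsub : V' ⊆ Vp t := by
      intro j hj
      obtain ⟨s, hts, hjs⟩ := hVclass j (hV' hj)
      rcases eq_or_lt_of_le hts with h | h
      · rwa [← h] at hjs
      · exfalso
        have h1 := hcolfull E' j s hjs
        have h2 := hα h
        rw [hcoleq j hj] at h1
        linarith
    refine ⟨hVsub, ?_⟩
    intro i hi
    obtain ⟨r, htr, hir⟩ := hEclass i (hE' hi)
    rcases eq_or_lt_of_le htr with h | h
    · rwa [← h] at hir
    · exfalso
      have hui : u i = 0 := by
        rw [← hArow i]
        apply Finset.sum_eq_zero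
        intro j _
        obtain ⟨s, hjs⟩ := hVmem j
        rcases lt_or_ge s r with hsr | hrs
        · rw [key r s hsr j hjs i hir, mul_zero]
        · by_cases hsupp : j ∈ supp i
          · have hjRV : j ∈ RV := hVin s j (le_of_lt (lt_of_lt_of_le h hrs)) hjs
            have hjV' : j ∈ V' := hclo i hi j hsupp hjRV
            have hst : t = s := hVuniq (hVsub hjV') hjs
            exact absurd hst (ne_of_lt (lt_of_lt_of_le h hrs))
          · rw [hAz i j hsupp, mul_zero]
      exact absurd hui (ne_of_gt (hu i))
end

section
/- If {(V_1,E_1),...,(V_k,E_k)} is the spectral decomposition of a weighted hypergraph H with densities α_1 > ... > α_k > 0, then {(E_k,V_k),...,(E_1,V_1)} is the spectral decomposition of the dual hypergraph H*, with densities α_k^{-1} > ... > α_1^{-1} > 0. -/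
/-- `IsSpectralDecomp n m k w u supp α Vp Ep` says that the partitions `V = ∪̇ Vp r`,
`E = ∪̇ Ep r` with strictly decreasing densities `α r` form the spectral decomposition of the
weighted hypergraph with `n` vertices (weights `w`), `m` hyperedges (weights `u`) and support
function `supp`: for each `t`, `(Vp t, Ep t)` is the unique maximal subgraph of maximum
density `α t` of the quotient hypergraph `(V \ ∪_{r<t} Vp r, E \ ∪_{r<t} Ep r)`. -/
def IsSpectralDecomp (n m k : ℕ) (w : Fin n → ℝ) (u : Fin m → ℝ)
    (supp : Fin m → Finset (Fin n)) (α : Fin k → ℝ)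
    (Vp : Fin k → Finset (Fin n)) (Ep : Fin k → Finset (Fin m)) : Prop :=
  StrictAnti α ∧
  (∀ r s, r ≠ s → Disjoint (Vp r) (Vp s)) ∧
  (∀ r s, r ≠ s → Disjoint (Ep r) (Ep s)) ∧
  Finset.univ.biUnion Vp = Finset.univ ∧
  Finset.univ.biUnion Ep = Finset.univ ∧
  ∀ t : Fin k,
    (fun (RV : Finset (Fin n)) (RE : Finset (Fin m)) =>
      (Vp t).Nonempty ∧
      (Vp t ⊆ RV ∧ Ep t ⊆ RE ∧
        (∀ i ∈ Ep t, ∀ j ∈ supp i, j ∈ RV → j ∈ Vp t)) ∧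
      (∑ i ∈ Ep t, u i) / (∑ j ∈ Vp t, w j) = α t ∧
      (∀ (V' : Finset (Fin n)) (E' : Finset (Fin m)),
        V' ⊆ RV → E' ⊆ RE → (∀ i ∈ E', ∀ j ∈ supp i, j ∈ RV → j ∈ V') →
        (∑ i ∈ E', u i) / (∑ j ∈ V', w j) ≤ α t) ∧
      (∀ (V' : Finset (Fin n)) (E' : Finset (Fin m)),
        V' ⊆ RV → E' ⊆ RE → (∀ i ∈ E', ∀ j ∈ supp i, j ∈ RV → j ∈ V') →
        V'.Nonempty → (∑ i ∈ E', u i) / (∑ j ∈ V', w j) = α t →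
        V' ⊆ Vp t ∧ E' ⊆ Ep t))
    (Finset.univ \ (Finset.univ.filter (fun r => r < t)).biUnion Vp)
    (Finset.univ \ (Finset.univ.filter (fun r => r < t)).biUnion Ep)

/-- Summing a function over a set can be decomposed along a partition. -/
lemma sum_partition_aux {β : Type*} [DecidableEq β] {k : ℕ} (P : Fin k → Finset β)
    (hcov : ∀ x, ∃ s, x ∈ P s) (huniq : ∀ {x : β} {r s : Fin k}, x ∈ P r → x ∈ P s → r = s)
    (f : β → ℝ) (S : Finset β) :
    ∑ x ∈ S, f x = ∑ s : Fin k, ∑ x ∈ S ∩ P s, f x := by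
  have h1 : ∀ x ∈ S, f x = ∑ s : Fin k, if x ∈ P s then f x else 0 := by
    intro x _
    obtain ⟨s0, hs0⟩ := hcov x
    rw [Finset.sum_eq_single s0]
    · simp [hs0]
    · intro b _ hb
      simp only [ite_eq_right_iff]
      intro hxb
      exact absurd (huniq hxb hs0) hb
    · simp
  rw [Finset.sum_congr rfl h1, Finset.sum_comm]
  refine Finset.sum_congr rfl fun s _ => ?_
  rw [← Finset.sum_filter, Finset.filter_mem_eq_inter]

/-- Duality: if `{(V₁,E₁),...,(V_k,E_k)}` is the spectral decomposition of `H` with densities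
`α₁ > ... > α_k > 0`, then `{(E_k,V_k),...,(E₁,V₁)}` is the spectral decomposition of the dual
hypergraph `H*` (whose vertices are the hyperedges of `H` and whose support function is
`supp*(v) = {e | v ∈ supp e}`), with densities `α_k⁻¹ > ... > α₁⁻¹ > 0`. -/
theorem stmt_16 (n m k : ℕ) (w : Fin n → ℝ) (u : Fin m → ℝ)
    (supp : Fin m → Finset (Fin n))
    (hw : ∀ j, 0 < w j) (hu : ∀ i, 0 < u i)
    (hne : ∀ i, (supp i).Nonempty) (hcov : ∀ j, ∃ i, j ∈ supp i)
    (α : Fin k → ℝ) (hαpos : ∀ r, 0 < α r)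
    (Vp : Fin k → Finset (Fin n)) (Ep : Fin k → Finset (Fin m))
    (hd : IsSpectralDecomp n m k w u supp α Vp Ep) :
    IsSpectralDecomp m n k u w
      (fun j => Finset.univ.filter (fun i => j ∈ supp i))
      (fun t => (α (Fin.rev t))⁻¹)
      (fun t => Ep (Fin.rev t)) (fun t => Vp (Fin.rev t)) := by
  obtain ⟨hanti, hVd, hEd, hVc, hEc, hmain⟩ := hd
  -- basic facts
  have hVuniq : ∀ {j : Fin n} {r s : Fin k}, j ∈ Vp r → j ∈ Vp s → r = s := by
    intro j r s hr hs
    by_contra h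
    exact Finset.disjoint_left.mp (hVd r s h) hr hs
  have hEuniq : ∀ {i : Fin m} {r s : Fin k}, i ∈ Ep r → i ∈ Ep s → r = s := by
    intro i r s hr hs
    by_contra h
    exact Finset.disjoint_left.mp (hEd r s h) hr hs
  have hVcov : ∀ j : Fin n, ∃ s, j ∈ Vp s := by
    intro j
    have : j ∈ Finset.univ.biUnion Vp := hVc ▸ Finset.mem_univ j
    simpa using this
  have hEcov : ∀ i : Fin m, ∃ s, i ∈ Ep s := by
    intro i
    have : i ∈ Finset.univ.biUnion Ep := hEc ▸ Finset.mem_univ i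
    simpa using this
  have hVne : ∀ s, (Vp s).Nonempty := fun s => (hmain s).1
  have hwpos : ∀ s, 0 < ∑ j ∈ Vp s, w j :=
    fun s => Finset.sum_pos (fun j _ => hw j) (hVne s)
  have hsum : ∀ s, ∑ i ∈ Ep s, u i = α s * ∑ j ∈ Vp s, w j :=
    fun s => (div_eq_iff (ne_of_gt (hwpos s))).mp (hmain s).2.2.1
  have hupos : ∀ s, 0 < ∑ i ∈ Ep s, u i :=
    fun s => (hsum s) ▸ mul_pos (hαpos s) (hwpos s)
  have hEne : ∀ s, (Ep s).Nonempty :=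
    fun s => Finset.nonempty_of_sum_ne_zero (ne_of_gt (hupos s))
  have hVsub : ∀ s, Vp s ⊆
      Finset.univ \ (Finset.univ.filter (fun r => r < s)).biUnion Vp :=
    fun s => (hmain s).2.1.1
  have hEsub : ∀ s, Ep s ⊆
      Finset.univ \ (Finset.univ.filter (fun r => r < s)).biUnion Ep :=
    fun s => (hmain s).2.1.2.1
  have hclosed : ∀ s, ∀ i ∈ Ep s, ∀ j ∈ supp i,
      j ∈ Finset.univ \ (Finset.univ.filter (fun r => r < s)).biUnion Vp → j ∈ Vp s :=
    fun s => (hmain s).2.1.2.2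
  have hmax := fun s => (hmain s).2.2.2.1
  have memRV : ∀ (t : Fin k) (j : Fin n),
      j ∈ Finset.univ \ (Finset.univ.filter (fun r => r < t)).biUnion Vp ↔
        ∀ r, r < t → j ∉ Vp r := by
    intro t j; simp
  have memRE : ∀ (t : Fin k) (i : Fin m),
      i ∈ Finset.univ \ (Finset.univ.filter (fun r => r < t)).biUnion Ep ↔
        ∀ r, r < t → i ∉ Ep r := by
    intro t i; simp
  -- key lemma: each edge of stage s has all its vertices in stages ≤ s
  have hstage_le : ∀ (s : Fin k) (i : Fin m) (j : Fin n) (r : Fin k),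
      i ∈ Ep s → j ∈ supp i → j ∈ Vp r → r ≤ s := by
    intro s i j r hi hj hjr
    by_contra h
    push_neg at h
    have hjRV : j ∈ Finset.univ \ (Finset.univ.filter (fun r => r < s)).biUnion Vp := by
      refine (memRV s j).mpr fun r' hr' hmem => ?_
      exact (hr'.trans h).ne' (hVuniq hjr hmem)
    exact (ne_of_gt h) (hVuniq hjr (hclosed s i hi j hj hjRV))
  -- key lemma: each edge of stage s has a vertex of stage s
  have hexists_stage : ∀ (s : Fin k) (i : Fin m), i ∈ Ep s → ∃ j ∈ supp i, j ∈ Vp s := by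
    intro s i hi
    by_contra h
    push_neg at h
    set F := Finset.univ.filter (fun r => ∃ j ∈ supp i, j ∈ Vp r) with hF
    have hFne : F.Nonempty := by
      obtain ⟨j, hj⟩ := hne i
      obtain ⟨r, hr⟩ := hVcov j
      refine ⟨r, ?_⟩
      simp only [hF, Finset.mem_filter, Finset.mem_univ, true_and]
      exact ⟨j, hj, hr⟩
    set r0 := F.max' hFne with hr0def
    obtain ⟨j0, hj0s, hj0⟩ := (Finset.mem_filter.mp (F.max'_mem hFne)).2
    have hr0le : r0 ≤ s := hstage_le s i j0 r0 hi hj0s hj0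
    have hr0lt : r0 < s := by
      refine lt_of_le_of_ne hr0le fun hrs => ?_
      exact h j0 hj0s (hrs ▸ hj0)
    have hiRE : i ∈ Finset.univ \ (Finset.univ.filter (fun r => r < r0)).biUnion Ep := by
      refine (memRE r0 i).mpr fun r' hr' hmem => ?_
      exact ((hr'.trans hr0lt).ne' (hEuniq hi hmem))
    have hins_sub : insert i (Ep r0) ⊆
        Finset.univ \ (Finset.univ.filter (fun r => r < r0)).biUnion Ep :=
      Finset.insert_subset hiRE (hEsub r0)
    have hcl : ∀ i' ∈ insert i (Ep r0), ∀ j ∈ supp i',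
        j ∈ Finset.univ \ (Finset.univ.filter (fun r => r < r0)).biUnion Vp → j ∈ Vp r0 := by
      intro i' hi' j hj hjR
      rcases Finset.mem_insert.mp hi' with rfl | hi'
      · obtain ⟨r, hr⟩ := hVcov j
        have hrle : r ≤ r0 := F.le_max' r (by
          simp only [hF, Finset.mem_filter, Finset.mem_univ, true_and]; exact ⟨j, hj, hr⟩)
        have hrge : ¬ r < r0 := fun hlt => (memRV r0 j).mp hjR r hlt hr
        have : r = r0 := le_antisymm hrle (not_lt.mp hrge)
        exact this ▸ hr
      · exact hclosed r0 i' hi' j hj hjR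
    have hle := hmax r0 (Vp r0) (insert i (Ep r0)) (hVsub r0) hins_sub hcl
    have hinotin : i ∉ Ep r0 := fun hmem => (ne_of_gt hr0lt) (hEuniq hi hmem)
    rw [Finset.sum_insert hinotin, div_le_iff₀ (hwpos r0)] at hle
    have := hsum r0
    have := hu i
    linarith
  -- Now prove the six components
  refine ⟨?_, ?_, ?_, ?_, ?_, ?_⟩
  · -- StrictAnti
    intro a b hab
    exact inv_strictAnti₀ (hαpos _) (hanti (Fin.rev_lt_rev.mpr hab))
  · intro r s h
    exact hEd _ _ fun e => h (Fin.rev_injective e)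
  · intro r s h
    exact hVd _ _ fun e => h (Fin.rev_injective e)
  · ext i
    simp only [Finset.mem_biUnion, Finset.mem_univ, iff_true, true_and]
    obtain ⟨s, hs⟩ := hEcov i
    exact ⟨s.rev, by rwa [Fin.rev_rev]⟩
  · ext j
    simp only [Finset.mem_biUnion, Finset.mem_univ, iff_true, true_and]
    obtain ⟨s, hs⟩ := hVcov j
    exact ⟨s.rev, by rwa [Fin.rev_rev]⟩
  · intro t
    set T := t.rev with hT
    -- membership in the dual remainder sets
    have memRE' : ∀ i : Fin m,
        i ∈ Finset.univ \ (Finset.univ.filter (fun r => r < t)).biUnion (fun r => Ep r.rev) ↔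
          ∀ s, T < s → i ∉ Ep s := by
      intro i
      simp only [Finset.mem_sdiff, Finset.mem_univ, true_and, Finset.mem_biUnion,
        Finset.mem_filter, not_exists, not_and]
      constructor
      · intro h s hs hmem
        have : s.rev < t := by
          rw [← Fin.rev_rev t]
          exact Fin.rev_lt_rev.mpr hs
        exact h s.rev this (by rwa [Fin.rev_rev])
      · intro h r hr hmem
        exact h r.rev (Fin.rev_lt_rev.mpr hr) hmem
    have memRV' : ∀ j : Fin n,
        j ∈ Finset.univ \ (Finset.univ.filter (fun r => r < t)).biUnion (fun r => Vp r.rev) ↔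
          ∀ s, T < s → j ∉ Vp s := by
      intro j
      simp only [Finset.mem_sdiff, Finset.mem_univ, true_and, Finset.mem_biUnion,
        Finset.mem_filter, not_exists, not_and]
      constructor
      · intro h s hs hmem
        have : s.rev < t := by
          rw [← Fin.rev_rev t]
          exact Fin.rev_lt_rev.mpr hs
        exact h s.rev this (by rwa [Fin.rev_rev])
      · intro h r hr hmem
        exact h r.rev (Fin.rev_lt_rev.mpr hr) hmem
    -- per-stage inequality for subgraphs of the dual quotient
    have perstage : ∀ (V'' : Finset (Fin m)) (E'' : Finset (Fin n)),
        (∀ i ∈ V'', ∀ s, T < s → i ∉ Ep s) →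
        (∀ j ∈ E'', ∀ i, j ∈ supp i → (∀ s, T < s → i ∉ Ep s) → i ∈ V'') →
        ∀ s : Fin k, s ≤ T →
          α s * (∑ j ∈ E'' ∩ Vp s, w j) ≤ ∑ i ∈ V'' ∩ Ep s, u i := by
      intro V'' E'' hV'' hcl'' s hsT
      have hREmem : ∀ i ∈ Ep s, ∀ s', T < s' → i ∉ Ep s' := by
        intro i hi s' hs' hmem
        exact (lt_of_le_of_lt hsT hs').ne' (hEuniq hmem hi)
      by_cases hsub : Vp s ⊆ E''
      · have hA : E'' ∩ Vp s = Vp s := Finset.inter_eq_right.mpr hsub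
        have hB : Ep s ⊆ V'' := by
          intro i hi
          obtain ⟨j, hj1, hj2⟩ := hexists_stage s i hi
          exact hcl'' j (hsub hj2) i hj1 (hREmem i hi)
        have hB' : V'' ∩ Ep s = Ep s := Finset.inter_eq_right.mpr hB
        rw [hA, hB']
        exact le_of_eq (hsum s).symm
      · have hV'ne : (Vp s \ E'').Nonempty := Finset.sdiff_nonempty.mpr hsub
        have hcl' : ∀ i ∈ Ep s \ V'', ∀ j ∈ supp i,
            j ∈ Finset.univ \ (Finset.univ.filter (fun r => r < s)).biUnion Vp →
              j ∈ Vp s \ E'' := by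
          intro i hi j hj hjR
          obtain ⟨hi1, hi2⟩ := Finset.mem_sdiff.mp hi
          have hjV : j ∈ Vp s := hclosed s i hi1 j hj hjR
          exact Finset.mem_sdiff.mpr ⟨hjV, fun hjE => hi2 (hcl'' j hjE i hj (hREmem i hi1))⟩
        have hle := hmax s (Vp s \ E'') (Ep s \ V'')
          ((Finset.sdiff_subset).trans (hVsub s))
          ((Finset.sdiff_subset).trans (hEsub s)) hcl'
        have hwV' : 0 < ∑ j ∈ Vp s \ E'', w j :=
          Finset.sum_pos (fun j _ => hw j) hV'ne
        rw [div_le_iff₀ hwV'] at hle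
        have e1 : ∑ j ∈ Vp s \ E'', w j = ∑ j ∈ Vp s, w j - ∑ j ∈ E'' ∩ Vp s, w j := by
          rw [show Vp s \ E'' = Vp s \ (E'' ∩ Vp s) by
            ext x; simp only [Finset.mem_sdiff, Finset.mem_inter]; tauto]
          exact Finset.sum_sdiff_eq_sub Finset.inter_subset_right
        have e2 : ∑ i ∈ Ep s \ V'', u i = ∑ i ∈ Ep s, u i - ∑ i ∈ V'' ∩ Ep s, u i := by
          rw [show Ep s \ V'' = Ep s \ (V'' ∩ Ep s) by
            ext x; simp only [Finset.mem_sdiff, Finset.mem_inter]; tauto]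
          exact Finset.sum_sdiff_eq_sub Finset.inter_subset_right
        rw [e1, e2, mul_sub] at hle
        have := hsum s
        linarith
    -- per-stage inequality with α T, valid for all stages
    have perstage2 : ∀ (V'' : Finset (Fin m)) (E'' : Finset (Fin n)),
        (∀ i ∈ V'', ∀ s, T < s → i ∉ Ep s) →
        (∀ j ∈ E'', ∀ s, T < s → j ∉ Vp s) →
        (∀ j ∈ E'', ∀ i, j ∈ supp i → (∀ s, T < s → i ∉ Ep s) → i ∈ V'') →
        ∀ s : Fin k,
          α T * (∑ j ∈ E'' ∩ Vp s, w j) ≤ ∑ i ∈ V'' ∩ Ep s, u i := by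
      intro V'' E'' hV'' hE'' hcl'' s
      rcases le_or_gt s T with hsT | hsT
      · calc α T * (∑ j ∈ E'' ∩ Vp s, w j)
            ≤ α s * (∑ j ∈ E'' ∩ Vp s, w j) := by
              apply mul_le_mul_of_nonneg_right (hanti.antitone hsT)
              exact Finset.sum_nonneg fun j _ => (hw j).le
          _ ≤ ∑ i ∈ V'' ∩ Ep s, u i := perstage V'' E'' hV'' hcl'' s hsT
      · have hA : E'' ∩ Vp s = ∅ := by
          rw [Finset.eq_empty_iff_forall_notMem]
          intro j hj
          obtain ⟨hj1, hj2⟩ := Finset.mem_inter.mp hj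
          exact hE'' j hj1 s hsT hj2
        rw [hA]
        simp only [Finset.sum_empty, mul_zero]
        exact Finset.sum_nonneg fun i _ => (hu i).le
    -- total inequality
    have total : ∀ (V'' : Finset (Fin m)) (E'' : Finset (Fin n)),
        (∀ i ∈ V'', ∀ s, T < s → i ∉ Ep s) →
        (∀ j ∈ E'', ∀ s, T < s → j ∉ Vp s) →
        (∀ j ∈ E'', ∀ i, j ∈ supp i → (∀ s, T < s → i ∉ Ep s) → i ∈ V'') →
        α T * (∑ j ∈ E'', w j) ≤ ∑ i ∈ V'', u i := by
      intro V'' E'' hV'' hE'' hcl''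
      rw [sum_partition_aux Vp hVcov hVuniq w E'',
        sum_partition_aux Ep hEcov hEuniq u V'', Finset.mul_sum]
      exact Finset.sum_le_sum fun s _ => perstage2 V'' E'' hV'' hE'' hcl'' s
    -- now assemble the six conditions of the dual decomposition at stage t
    refine ⟨hEne T, ⟨?_, ?_, ?_⟩, ?_, ?_, ?_⟩
    · -- Ep T ⊆ RE*
      intro i hi
      refine (memRE' i).mpr fun s hs hmem => (ne_of_gt hs) (hEuniq hmem hi)
    · -- Vp T ⊆ RV*
      intro j hj
      refine (memRV' j).mpr fun s hs hmem => (ne_of_gt hs) (hVuniq hmem hj)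
    · -- dual closedness
      intro j hj i hi hiR
      show i ∈ Ep T
      have hji : j ∈ supp i := (Finset.mem_filter.mp hi).2
      obtain ⟨s, hs⟩ := hEcov i
      have h1 : T ≤ s := hstage_le s i j T hs hji hj
      have h2 : ¬ T < s := fun hlt => (memRE' i).mp hiR s hlt hs
      have : s = T := le_antisymm (not_lt.mp h2) h1
      exact this ▸ hs
    · -- density
      show (∑ j ∈ Vp T, w j) / (∑ i ∈ Ep T, u i) = (α T)⁻¹
      rw [hsum T, mul_comm, div_mul_eq_div_div, div_self (ne_of_gt (hwpos T)), one_div]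
    · -- maximality
      intro V'' E'' h1 h2 h3
      have hV''r : ∀ i ∈ V'', ∀ s, T < s → i ∉ Ep s := fun i hi => (memRE' i).mp (h1 hi)
      have hE''r : ∀ j ∈ E'', ∀ s, T < s → j ∉ Vp s := fun j hj => (memRV' j).mp (h2 hj)
      have hcl'' : ∀ j ∈ E'', ∀ i, j ∈ supp i → (∀ s, T < s → i ∉ Ep s) → i ∈ V'' := by
        intro j hj i hij hir
        exact h3 j hj i (Finset.mem_filter.mpr ⟨Finset.mem_univ i, hij⟩) ((memRE' i).mpr hir)
      have key := total V'' E'' hV''r hE''r hcl''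
      rcases Finset.eq_empty_or_nonempty V'' with rfl | hVne''
      · simp only [Finset.sum_empty, div_zero]
        exact inv_nonneg.mpr (hαpos T).le
      · have hup : 0 < ∑ i ∈ V'', u i := Finset.sum_pos (fun i _ => hu i) hVne''
        rw [div_le_iff₀ hup]
        calc ∑ j ∈ E'', w j ≤ (α T)⁻¹ * ((α T) * ∑ j ∈ E'', w j) := by
              rw [← mul_assoc, inv_mul_cancel₀ (ne_of_gt (hαpos T)), one_mul]
          _ ≤ (α T)⁻¹ * ∑ i ∈ V'', u i := by
              apply mul_le_mul_of_nonneg_left key (inv_nonneg.mpr (hαpos T).le)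
    · -- uniqueness
      intro V'' E'' h1 h2 h3 hVne'' heq
      have hV''r : ∀ i ∈ V'', ∀ s, T < s → i ∉ Ep s := fun i hi => (memRE' i).mp (h1 hi)
      have hE''r : ∀ j ∈ E'', ∀ s, T < s → j ∉ Vp s := fun j hj => (memRV' j).mp (h2 hj)
      have hcl'' : ∀ j ∈ E'', ∀ i, j ∈ supp i → (∀ s, T < s → i ∉ Ep s) → i ∈ V'' := by
        intro j hj i hij hir
        exact h3 j hj i (Finset.mem_filter.mpr ⟨Finset.mem_univ i, hij⟩) ((memRE' i).mpr hir)
      have hup : 0 < ∑ i ∈ V'', u i := Finset.sum_pos (fun i _ => hu i) hVne''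
      rw [div_eq_iff (ne_of_gt hup)] at heq
      have heq' : α T * (∑ j ∈ E'', w j) = ∑ i ∈ V'', u i := by
        rw [heq, ← mul_assoc, mul_inv_cancel₀ (ne_of_gt (hαpos T)), one_mul]
      -- termwise equality
      have hsum0 : ∑ s : Fin k,
          ((∑ i ∈ V'' ∩ Ep s, u i) - α T * (∑ j ∈ E'' ∩ Vp s, w j)) = 0 := by
        rw [Finset.sum_sub_distrib, ← Finset.mul_sum,
          ← sum_partition_aux Vp hVcov hVuniq w E'',
          ← sum_partition_aux Ep hEcov hEuniq u V'', heq', sub_self]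
      have hterm : ∀ s : Fin k,
          (∑ i ∈ V'' ∩ Ep s, u i) = α T * (∑ j ∈ E'' ∩ Vp s, w j) := by
        intro s
        have h0 := (Finset.sum_eq_zero_iff_of_nonneg
          (fun s _ => sub_nonneg.mpr (perstage2 V'' E'' hV''r hE''r hcl'' s))).mp hsum0
          s (Finset.mem_univ s)
        linarith [h0]
      -- for s < T, pieces are empty
      have hempty : ∀ s : Fin k, s < T →
          E'' ∩ Vp s = ∅ ∧ V'' ∩ Ep s = ∅ := by
        intro s hsT
        have hstrong := perstage V'' E'' hV''r hcl'' s hsT.le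
        have hts := hterm s
        have hwA : 0 ≤ ∑ j ∈ E'' ∩ Vp s, w j :=
          Finset.sum_nonneg fun j _ => (hw j).le
        have hαlt : α T < α s := hanti hsT
        have hwA0 : ∑ j ∈ E'' ∩ Vp s, w j = 0 := by nlinarith
        have hA : E'' ∩ Vp s = ∅ := by
          by_contra hA
          have := Finset.sum_pos (fun j (_ : j ∈ E'' ∩ Vp s) => hw j)
            (Finset.nonempty_of_ne_empty hA)
          linarith
        have hB : V'' ∩ Ep s = ∅ := by
          by_contra hB
          have := Finset.sum_pos (fun i (_ : i ∈ V'' ∩ Ep s) => hu i)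
            (Finset.nonempty_of_ne_empty hB)
          rw [hts, hwA0, mul_zero] at this
          exact lt_irrefl 0 this
        exact ⟨hA, hB⟩
      constructor
      · intro i hi
        show i ∈ Ep T
        obtain ⟨s, hs⟩ := hEcov i
        have hle : ¬ T < s := fun hlt => hV''r i hi s hlt hs
        have hslt : s = T := by
          rcases lt_or_eq_of_le (not_lt.mp hle) with hlt | h
          · exfalso
            have := (hempty s hlt).2
            have hmem : i ∈ V'' ∩ Ep s := Finset.mem_inter.mpr ⟨hi, hs⟩
            rw [this] at hmem
            exact absurd hmem (Finset.notMem_empty i)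
          · exact h
        exact hslt ▸ hs
      · intro j hj
        show j ∈ Vp T
        obtain ⟨s, hs⟩ := hVcov j
        have hle : ¬ T < s := fun hlt => hE''r j hj s hlt hs
        have hslt : s = T := by
          rcases lt_or_eq_of_le (not_lt.mp hle) with hlt | h
          · exfalso
            have := (hempty s hlt).1
            have hmem : j ∈ E'' ∩ Vp s := Finset.mem_inter.mpr ⟨hj, hs⟩
            rw [this] at hmem
            exact absurd hmem (Finset.notMem_empty j)
          · exact h
        exact hslt ▸ hs
end

section
/- Given a spectral decomposition {(V_r, E_r)} of H with densities α_r and a support matrix A with block structure (a_{ij} ≠ 0 only if v_j ∈ V_r and e_i ∈ E_r for some r) and column sums s_j(A) = α_r for v_j ∈ V_r, the matrix B with entries b_{ji} = α_r^{-1} u_i^{-1} a_{ij} w_j (where v_j ∈ V_r) is a support matrix for the dual hypergraph H*, and its column sums satisfy Σ_j b_{ji} = α_r^{-1} whenever e_i ∈ E_r. -/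
/-- Given the spectral decomposition `{(V_r, E_r)}` of `H` with densities `α_r` and an optimal
support matrix `A` with block structure and column sums `s_j(A) = α_r` for `v_j ∈ V_r`, the
matrix `B` with entries `b_{ji} = α_r⁻¹ u_i⁻¹ a_{ij} w_j` (where `v_j ∈ V_r`, recorded by a
part-assignment `ρ`) is a support matrix for the dual hypergraph `H*`, and its column sums
satisfy `∑_j b_{ji} = α_r⁻¹` whenever `e_i ∈ E_r`. -/
theorem stmt_19 (n m k : ℕ) (w : Fin n → ℝ) (u : Fin m → ℝ)
    (supp : Fin m → Finset (Fin n))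
    (hw : ∀ j, 0 < w j) (hu : ∀ i, 0 < u i)
    (α : Fin k → ℝ) (hαpos : ∀ r, 0 < α r)
    (Vp : Fin k → Finset (Fin n)) (Ep : Fin k → Finset (Fin m))
    (hVd : ∀ r s, r ≠ s → Disjoint (Vp r) (Vp s))
    (hEd : ∀ r s, r ≠ s → Disjoint (Ep r) (Ep s))
    (hVu : Finset.univ.biUnion Vp = Finset.univ)
    (hEu : Finset.univ.biUnion Ep = Finset.univ)
    (ρ : Fin n → Fin k) (hρ : ∀ j, j ∈ Vp (ρ j))
    (A : Matrix (Fin m) (Fin n) ℝ)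
    (hA0 : ∀ i j, 0 ≤ A i j)
    (hAz : ∀ i j, j ∉ supp i → A i j = 0)
    (hArow : ∀ i, ∑ j, w j * A i j = u i)
    (hblock : ∀ i j, A i j ≠ 0 → ∃ r, j ∈ Vp r ∧ i ∈ Ep r)
    (hcol : ∀ r, ∀ j ∈ Vp r, ∑ i, A i j = α r) :
    -- `B j i = α_{ρ j}⁻¹ u_i⁻¹ a_{ij} w_j` is a support matrix for the dual hypergraph `H*`:
    (∀ j i, 0 ≤ (α (ρ j))⁻¹ * (u i)⁻¹ * A i j * w j) ∧
    -- vanishing outside dual supports: `b_{ji} = 0` when `e_i ∉ supp*(v_j)`, i.e. `j ∉ supp i`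
    (∀ j i, j ∉ supp i → (α (ρ j))⁻¹ * (u i)⁻¹ * A i j * w j = 0) ∧
    -- weighted row sums: `∑_i u_i b_{ji} = w_j`
    (∀ j, ∑ i, u i * ((α (ρ j))⁻¹ * (u i)⁻¹ * A i j * w j) = w j) ∧
    -- column sums: `∑_j b_{ji} = α_r⁻¹` for `e_i ∈ E_r`
    (∀ r, ∀ i ∈ Ep r, ∑ j, (α (ρ j))⁻¹ * (u i)⁻¹ * A i j * w j = (α r)⁻¹) := by
  refine ⟨?_, ?_, ?_, ?_⟩
  · intro j i
    have := (hαpos (ρ j)).le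
    have := (hu i).le
    have := (hw j).le
    have := hA0 i j
    positivity
  · intro j i h
    rw [hAz i j h]; ring
  · intro j
    have h1 : ∀ i, u i * ((α (ρ j))⁻¹ * (u i)⁻¹ * A i j * w j)
        = (α (ρ j))⁻¹ * w j * A i j := by
      intro i
      rw [show u i * ((α (ρ j))⁻¹ * (u i)⁻¹ * A i j * w j)
        = (u i * (u i)⁻¹) * ((α (ρ j))⁻¹ * A i j * w j) by ring,
        mul_inv_cancel₀ (hu i).ne']
      ring
    rw [Finset.sum_congr rfl fun i _ => h1 i, ← Finset.mul_sum,
      hcol (ρ j) j (hρ j)]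
    rw [mul_comm (α (ρ j))⁻¹ (w j), mul_assoc, inv_mul_cancel₀ (hαpos (ρ j)).ne', mul_one]
  · intro r i hi
    have key : ∀ j, (α (ρ j))⁻¹ * (u i)⁻¹ * A i j * w j
        = (α r)⁻¹ * (u i)⁻¹ * (w j * A i j) := by
      intro j
      by_cases h : A i j = 0
      · simp [h]
      · obtain ⟨s, hjs, his⟩ := hblock i j h
        have hsr : s = r := by
          by_contra hne
          exact Finset.disjoint_left.mp (hEd s r hne) his hi
        have hρj : ρ j = r := by
          by_contra hne
          exact Finset.disjoint_left.mp (hVd (ρ j) r hne) (hρ j) (hsr ▸ hjs)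
        rw [hρj]; ring
    rw [Finset.sum_congr rfl fun j _ => key j, ← Finset.mul_sum, hArow i]
    rw [mul_assoc, inv_mul_cancel₀ (hu i).ne', mul_one]
end
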